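/- arXiv:2602.13492 — 6 statements merged into one kernel-verified Lean document; each statement's English description precedes it below -/
import Mathlib

section
/- Uniqueness of the interpolation Macdonald polynomial (Knop–Sahi): Let λ = (λ₁ ≥ … ≥ λₙ ≥ 0) be a partition. If P and P′ are two polynomials in K[x₁,…,xₙ] that each satisfy the defining conditions of the interpolation Macdonald polynomial P*_λ (symmetric, total degree ≤ |λ|, coefficient of x^λ equal to 1, and vanishing at ν̄ for every partition ν ≠ λ with |ν| ≤ |λ|), then P = P′. -/
open MvPolynomial

noncomputable section

/-- `k = ℚ(t)`, the field of rational functions in `t` over `ℚ`. -/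
abbrev kk : Type := RatFunc ℚ

/-- `K = k(q)`, the field of rational functions in `q` over `k`. -/
abbrev KK : Type := RatFunc kk

/-- The element `t` of `k`. -/
def tk : kk := RatFunc.X

/-- The element `t` of `K`. -/
def tK : KK := RatFunc.C tk

/-- The element `q` of `K`. -/
def qK : KK := RatFunc.X

/-- `kᵢ(μ) = #{j < i : μⱼ > μᵢ} + #{j > i : μⱼ ≥ μᵢ}`. -/
def kStat {n : ℕ} (μ : Fin n → ℕ) (i : Fin n) : ℕ :=
  (Finset.univ.filter (fun j => j < i ∧ μ i < μ j)).card +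
    (Finset.univ.filter (fun j => i < j ∧ μ i ≤ μ j)).card

/-- `μ̄ = (q^{μ₁} t^{−k₁(μ)}, …, q^{μₙ} t^{−kₙ(μ)}) ∈ Kⁿ`. -/
def mubar {n : ℕ} (μ : Fin n → ℕ) : Fin n → KK :=
  fun i => qK ^ (μ i) * tK ^ (-(kStat μ i : ℤ))

/-- `|μ| = μ₁ + ⋯ + μₙ`. -/
def wt {n : ℕ} (μ : Fin n → ℕ) : ℕ := ∑ i, μ i

/-- A partition: a weakly decreasing composition. -/
def IsPartition {n : ℕ} (μ : Fin n → ℕ) : Prop := ∀ i j : Fin n, i ≤ j → μ j ≤ μ i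

/-- The exponent vector of the monomial `x^μ`. -/
def toMono {n : ℕ} (μ : Fin n → ℕ) : Fin n →₀ ℕ := Finsupp.equivFunOnFinite.symm μ

/-- `Sₙ(λ)`: the set of compositions obtained by permuting the entries of `λ`. -/
def permSet {n : ℕ} (lam : Fin n → ℕ) : Finset (Fin n → ℕ) :=
  Finset.image (fun σ : Equiv.Perm (Fin n) => lam ∘ σ) Finset.univ

/-- The defining conditions of the interpolation Macdonald polynomial `P*_λ`. -/
def IsIntMacdonald {n : ℕ} (lam : Fin n → ℕ) (P : MvPolynomial (Fin n) KK) : Prop :=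
  P.IsSymmetric ∧ P.totalDegree ≤ wt lam ∧ P.coeff (toMono lam) = 1 ∧
    ∀ ν : Fin n → ℕ, IsPartition ν → ν ≠ lam → wt ν ≤ wt lam →
      MvPolynomial.eval (mubar ν) P = 0

/-- The defining conditions of the interpolation ASEP polynomial `F*_μ`,
with respect to the partition `λ` (the decreasing rearrangement of `μ`). -/
def IsIntASEP {n : ℕ} (lam μ : Fin n → ℕ) (F : MvPolynomial (Fin n) KK) : Prop :=
  F.totalDegree ≤ wt lam ∧
    (∀ τ ∈ permSet lam, F.coeff (toMono τ) = if τ = μ then 1 else 0) ∧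
    ∀ ν : Fin n → ℕ, wt ν ≤ wt lam → ν ∉ permSet lam →
      MvPolynomial.eval (mubar ν) F = 0

/-- The defining conditions of the nonsymmetric interpolation Macdonald polynomial `E*_μ`. -/
def IsIntE {n : ℕ} (μ : Fin n → ℕ) (E : MvPolynomial (Fin n) KK) : Prop :=
  E.totalDegree ≤ wt μ ∧ E.coeff (toMono μ) = 1 ∧
    ∀ ν : Fin n → ℕ, ν ≠ μ → wt ν ≤ wt μ → MvPolynomial.eval (mubar ν) E = 0

/-- Evaluation of a rational function in `q` at `q = 1` (junk value if not regular there). -/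
def atOne (c : KK) : kk := RatFunc.eval (RingHom.id kk) 1 c

/-- `P` is regular at `q = 1`: the reduced denominator of each coefficient does not
vanish at `q = 1`. -/
def RegAtOne {n : ℕ} (P : MvPolynomial (Fin n) KK) : Prop :=
  ∀ m : Fin n →₀ ℕ, Polynomial.eval (1 : kk) (P.coeff m).denom ≠ 0

/-- Coefficient-wise evaluation of `P` at `q = 1`. -/
def evalq1 {n : ℕ} (P : MvPolynomial (Fin n) KK) : MvPolynomial (Fin n) kk :=
  ∑ m ∈ P.support, monomial m (atOne (P.coeff m))

/-- The interpolation elementary polynomial `e*_{m,ℓ}(x₁,…,xₙ;t)`, with coefficients in `k`. -/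
def estar (n m : ℕ) (ℓ : ℤ) : MvPolynomial (Fin n) kk :=
  ∑ S ∈ Finset.powersetCard m (Finset.univ : Finset (Fin n)),
    ∏ i ∈ S, (X i - C (tk ^ (((Sᶜ.filter (fun j => j < i)).card : ℤ) - ℓ)))

/-- The interpolation elementary polynomial `e*_{m,ℓ}(x₁,…,xₙ;t)`, with coefficients in `K`. -/
def estarK (n m : ℕ) (ℓ : ℤ) : MvPolynomial (Fin n) KK :=
  ∑ S ∈ Finset.powersetCard m (Finset.univ : Finset (Fin n)),
    ∏ i ∈ S, (X i - C (tK ^ (((Sᶜ.filter (fun j => j < i)).card : ℤ) - ℓ)))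

/-- The conjugate partition: `λ′ᵢ = #{j : λⱼ ≥ i}`. -/
def conjP {n : ℕ} (lam : Fin n → ℕ) (i : ℕ) : ℕ :=
  (Finset.univ.filter (fun j => i ≤ lam j)).card

/-!
A symmetric polynomial of degree `≤ d` is determined by its values at the points `ν̄`, `ν` a
partition with `|ν| ≤ d`. Indeed, expand it in the orbit sums `m_κ = ∑_{τ ∈ Sₙ κ} x^τ`; then
`m_κ(ν̄) = ∑_τ t^{-⟨τ, k(ν)⟩} q^{⟨τ, ν⟩}` is a polynomial in `q`, and since
`2⟨τ, ν⟩ < |κ|² + |ν|²` for every rearrangement `τ ≠ ν` of `κ`, the diagonal of the evaluation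
matrix dominates the `q`-degree of its determinant, which is therefore nonzero.
Consequently the symmetric polynomials of degree `≤ |λ|` vanishing at `ν̄` for all partitions
`ν ≠ λ` with `|ν| ≤ |λ|` form a space of dimension at most one, and the normalisation of the
coefficient of `x^λ` singles out one element of it.
-/

open Polynomial in
theorem Matrix.det_ne_zero_of_two_mul_natDegree_lt {ι R : Type*} [Fintype ι] [DecidableEq ι]
    [CommRing R] [IsDomain R] (M : Matrix ι ι R[X]) (w : ι → ℕ)
    (hdiag : ∀ i, M i i ≠ 0 ∧ (M i i).natDegree = w i)
    (hoff : ∀ i j, i ≠ j → 2 * (M i j).natDegree < w i + w j) : M.det ≠ 0 := by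
  set A := ∑ i, w i
  have hid : (∏ i, M i i).coeff A ≠ 0 := by
    have hdeg : (∏ i, M i i).natDegree = A := by
      rw [natDegree_prod _ _ fun i _ => (hdiag i).1]
      exact Finset.sum_congr rfl fun i _ => (hdiag i).2
    rw [← hdeg, ← leadingCoeff, leadingCoeff_ne_zero]
    exact Finset.prod_ne_zero_iff.2 fun i _ => (hdiag i).1
  have hperm (π : Equiv.Perm ι) (hπ : π ≠ 1) : (∏ i, M (π i) i).coeff A = 0 := by
    obtain ⟨j, hj⟩ : ∃ j, π j ≠ j := by
      by_contra! h
      exact hπ (Equiv.ext h)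
    have hlt : ∑ i, 2 * (M (π i) i).natDegree < ∑ i, (w (π i) + w i) := by
      refine Finset.sum_lt_sum (fun i _ => ?_) ⟨j, Finset.mem_univ j, hoff _ _ hj⟩
      rcases eq_or_ne (π i) i with h | h
      · rw [h, (hdiag i).2]; omega
      · exact (hoff _ _ h).le
    rw [Finset.sum_add_distrib, Equiv.sum_comp π w, ← Finset.mul_sum] at hlt
    refine coeff_eq_zero_of_natDegree_lt ((natDegree_prod_le _ _).trans_lt ?_)
    omega
  intro h
  have := congrArg (Polynomial.coeff · A) h
  simp only [Matrix.det_apply, finsetSum_coeff, Polynomial.coeff_zero] at this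
  rw [Finset.sum_eq_single 1 (fun π _ hπ => by
    rw [Units.smul_def, Polynomial.coeff_smul, hperm π hπ, smul_zero]) (by simp)] at this
  simp [hid] at this

namespace InterpolationMacdonald

variable {n : ℕ}

lemma mem_permSet {τ κ : Fin n → ℕ} : τ ∈ permSet κ ↔ ∃ σ : Equiv.Perm (Fin n), κ ∘ σ = τ := by
  simp [permSet]

lemma self_mem_permSet (κ : Fin n → ℕ) : κ ∈ permSet κ := mem_permSet.2 ⟨1, rfl⟩

lemma sum_comp_of_mem_permSet {M : Type*} [AddCommMonoid M] {τ κ : Fin n → ℕ}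
    (h : τ ∈ permSet κ) (f : ℕ → M) : ∑ i, f (τ i) = ∑ i, f (κ i) := by
  obtain ⟨σ, rfl⟩ := mem_permSet.1 h
  exact Equiv.sum_comp σ (f ∘ κ)

lemma wt_eq_of_mem_permSet {τ κ : Fin n → ℕ} (h : τ ∈ permSet κ) : wt τ = wt κ :=
  sum_comp_of_mem_permSet h id

lemma dotProduct_self_eq_of_mem_permSet {τ κ : Fin n → ℕ} (h : τ ∈ permSet κ) :
    τ ⬝ᵥ τ = κ ⬝ᵥ κ :=
  sum_comp_of_mem_permSet h fun x => x * x

lemma exists_isPartition_mem_permSet (g : Fin n → ℕ) :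
    ∃ μ, IsPartition μ ∧ g ∈ permSet μ := by
  set σ := Fin.revPerm.trans (Tuple.sort g)
  refine ⟨g ∘ σ, fun i j hij => Tuple.monotone_sort g (Fin.rev_le_rev.2 hij),
    mem_permSet.2 ⟨σ⁻¹, ?_⟩⟩
  ext i
  simp

lemma IsPartition.eq_of_mem_permSet {g μ μ' : Fin n → ℕ} (hμ : IsPartition μ)
    (hμ' : IsPartition μ') (h : g ∈ permSet μ) (h' : g ∈ permSet μ') : μ = μ' := by
  obtain ⟨σ, rfl⟩ := mem_permSet.1 h
  obtain ⟨σ', hσ'⟩ := mem_permSet.1 h'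
  have hμ'σ : μ' = (μ ∘ σ) ∘ (σ'⁻¹ : Equiv.Perm (Fin n)) := by
    ext i; simp [← hσ']
  have hμσ : μ = (μ ∘ σ) ∘ (σ⁻¹ : Equiv.Perm (Fin n)) := by
    ext i; simp
  calc μ = (μ ∘ σ) ∘ (σ⁻¹ : Equiv.Perm (Fin n)) := hμσ
    _ = (μ ∘ σ) ∘ (σ'⁻¹ : Equiv.Perm (Fin n)) := Tuple.unique_antitone
        (by rw [← hμσ]; exact fun i j hij => hμ i j hij)
        (by rw [← hμ'σ]; exact fun i j hij => hμ' i j hij)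
    _ = μ' := hμ'σ.symm

instance : DecidablePred (IsPartition (n := n)) := fun μ =>
  inferInstanceAs (Decidable (∀ i j : Fin n, i ≤ j → μ j ≤ μ i))

def partitionsWtLE (n d : ℕ) : Finset (Fin n → ℕ) :=
  (Fintype.piFinset fun _ => Finset.range (d + 1)).filter fun μ => IsPartition μ ∧ wt μ ≤ d

lemma mem_partitionsWtLE {d : ℕ} {μ : Fin n → ℕ} :
    μ ∈ partitionsWtLE n d ↔ IsPartition μ ∧ wt μ ≤ d := by
  refine ⟨fun h => (Finset.mem_filter.1 h).2, fun h => Finset.mem_filter.2 ⟨?_, h⟩⟩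
  refine Fintype.mem_piFinset.2 fun i => Finset.mem_range_succ_iff.2 (le_trans ?_ h.2)
  exact Finset.single_le_sum (fun j _ => Nat.zero_le (μ j)) (Finset.mem_univ i)

lemma wt_coe_le_totalDegree_of_coeff_ne_zero {R : Type*} [CommSemiring R]
    {f : MvPolynomial (Fin n) R} {m : Fin n →₀ ℕ} (h : f.coeff m ≠ 0) :
    wt ⇑m ≤ f.totalDegree := by
  rw [wt, ← Finsupp.sum_fintype m (fun _ e => e) fun _ => rfl]
  exact le_totalDegree (mem_support_iff.2 h)

variable (R : Type*) [CommSemiring R]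

def orbitSum (κ : Fin n → ℕ) : MvPolynomial (Fin n) R :=
  ∑ τ ∈ permSet κ, monomial (toMono τ) 1

variable {R}

lemma coeff_orbitSum (κ : Fin n → ℕ) (m : Fin n →₀ ℕ) :
    (orbitSum R κ).coeff m = if ⇑m ∈ permSet κ then 1 else 0 := by
  have hm (τ : Fin n → ℕ) : toMono τ = m ↔ τ = ⇑m := Finsupp.equivFunOnFinite.symm_apply_eq
  simp only [orbitSum, coeff_sum, coeff_monomial, hm, Finset.sum_ite_eq']

lemma _root_.MvPolynomial.IsSymmetric.coeff_eq_of_mem_permSet {f : MvPolynomial (Fin n) R}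
    (hf : f.IsSymmetric) {m : Fin n →₀ ℕ} {κ : Fin n → ℕ} (h : ⇑m ∈ permSet κ) :
    f.coeff m = f.coeff (toMono κ) := by
  obtain ⟨σ, hσ⟩ := mem_permSet.1 h
  have hmap : m = (toMono κ).mapDomain ⇑σ⁻¹ := by
    ext j
    rw [Finsupp.mapDomain_equiv_apply, ← hσ]
    simp [toMono, Equiv.Perm.inv_def]
  calc f.coeff m = (rename ⇑σ⁻¹ f).coeff m := by rw [hf σ⁻¹]
    _ = f.coeff (toMono κ) := by rw [hmap, coeff_rename_mapDomain _ σ⁻¹.injective]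

lemma _root_.MvPolynomial.IsSymmetric.eq_sum_orbitSum {f : MvPolynomial (Fin n) R}
    (hf : f.IsSymmetric) {d : ℕ} (hd : f.totalDegree ≤ d) :
    f = ∑ κ ∈ partitionsWtLE n d, f.coeff (toMono κ) • orbitSum R κ := by
  ext m
  simp only [coeff_sum, coeff_smul, coeff_orbitSum, smul_eq_mul, mul_ite, mul_one, mul_zero]
  obtain ⟨μ, hμ, hmμ⟩ := exists_isPartition_mem_permSet ⇑m
  by_cases hmd : wt ⇑m ≤ d
  · have hμd : μ ∈ partitionsWtLE n d :=
      mem_partitionsWtLE.2 ⟨hμ, (wt_eq_of_mem_permSet hmμ).symm.trans_le hmd⟩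
    rw [Finset.sum_eq_single_of_mem μ hμd, if_pos hmμ, hf.coeff_eq_of_mem_permSet hmμ]
    intro κ hκ hκμ
    exact if_neg fun hmκ =>
      hκμ (IsPartition.eq_of_mem_permSet (mem_partitionsWtLE.1 hκ).1 hμ hmκ hmμ)
  · rw [Finset.sum_eq_zero fun κ hκ => if_neg fun hmκ => hmd ?_]
    · by_contra hm
      exact hmd (hd.trans' (wt_coe_le_totalDegree_of_coeff_ne_zero hm))
    exact (wt_eq_of_mem_permSet hmκ).trans_le (mem_partitionsWtLE.1 hκ).2

lemma two_mul_dotProduct_lt {ι : Type*} [Fintype ι] {a b : ι → ℕ} (h : a ≠ b) :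
    2 * (a ⬝ᵥ b) < a ⬝ᵥ a + b ⬝ᵥ b := by
  obtain ⟨i, hi⟩ := Function.ne_iff.1 h
  simp only [dotProduct, Finset.mul_sum, ← Finset.sum_add_distrib]
  refine Finset.sum_lt_sum (fun j _ => ?_) ⟨i, Finset.mem_univ i, ?_⟩
  · rcases le_total (a j) (b j) with hj | hj <;> nlinarith
  · rcases Nat.lt_or_gt_of_ne hi with hi | hi <;> nlinarith

lemma two_mul_dotProduct_lt_of_mem_permSet {τ κ ν : Fin n → ℕ} (hτ : τ ∈ permSet κ)
    (h : τ ≠ ν) : 2 * (τ ⬝ᵥ ν) < κ ⬝ᵥ κ + ν ⬝ᵥ ν :=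
  dotProduct_self_eq_of_mem_permSet hτ ▸ two_mul_dotProduct_lt h

lemma eval_mubar_monomial (ν τ : Fin n → ℕ) :
    eval (mubar ν) (monomial (toMono τ) (1 : KK)) = qK ^ (τ ⬝ᵥ ν) * (tK ^ (τ ⬝ᵥ kStat ν))⁻¹ := by
  have hpow (i : Fin n) :
      mubar ν i ^ τ i = qK ^ (τ i * ν i) * (tK ^ (τ i * kStat ν i))⁻¹ := by
    rw [mubar, mul_pow, ← pow_mul, zpow_neg, zpow_natCast, inv_pow, ← pow_mul,
      mul_comm (ν i), mul_comm (kStat ν i)]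
  rw [eval_monomial, one_mul, Finsupp.prod_fintype _ _ fun _ => pow_zero _]
  simp only [toMono, Finsupp.coe_equivFunOnFinite_symm, hpow, Finset.prod_mul_distrib,
    Finset.prod_inv_distrib, Finset.prod_pow_eq_pow_sum, dotProduct]

/-- The value of `orbitSum KK κ` at `mubar ν`, as a polynomial in `q` over `k`. -/
def orbitSumAt (ν κ : Fin n → ℕ) : Polynomial kk :=
  ∑ τ ∈ permSet κ, Polynomial.C (tk ^ (τ ⬝ᵥ kStat ν))⁻¹ * Polynomial.X ^ (τ ⬝ᵥ ν)

lemma eval_mubar_orbitSum (ν κ : Fin n → ℕ) :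
    eval (mubar ν) (orbitSum KK κ) = algebraMap (Polynomial kk) KK (orbitSumAt ν κ) := by
  simp only [orbitSum, orbitSumAt, map_sum, eval_mubar_monomial, map_mul, map_pow, map_inv₀,
    RatFunc.algebraMap_C, RatFunc.algebraMap_X, mul_comm, qK, tK, tk]

lemma natDegree_orbitSumAt_le {ν κ : Fin n → ℕ} {B : ℕ} (h : ∀ τ ∈ permSet κ, τ ⬝ᵥ ν ≤ B) :
    (orbitSumAt ν κ).natDegree ≤ B :=
  Polynomial.natDegree_sum_le_of_forall_le _ _ fun τ hτ =>
    (Polynomial.natDegree_C_mul_le _ _).trans (by simpa using h τ hτ)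

lemma coeff_orbitSumAt_self (ν : Fin n → ℕ) :
    (orbitSumAt ν ν).coeff (ν ⬝ᵥ ν) = (tk ^ (ν ⬝ᵥ kStat ν))⁻¹ := by
  rw [orbitSumAt, Polynomial.finsetSum_coeff, Finset.sum_eq_single_of_mem ν (self_mem_permSet ν),
    Polynomial.coeff_C_mul_X_pow, if_pos rfl]
  intro τ hτ hτν
  have := two_mul_dotProduct_lt_of_mem_permSet hτ hτν
  rw [Polynomial.coeff_C_mul_X_pow, if_neg (by omega)]

lemma orbitSumAt_self_ne_zero_and_natDegree (ν : Fin n → ℕ) :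
    orbitSumAt ν ν ≠ 0 ∧ (orbitSumAt ν ν).natDegree = ν ⬝ᵥ ν := by
  have hcoeff : (orbitSumAt ν ν).coeff (ν ⬝ᵥ ν) ≠ 0 := by
    rw [coeff_orbitSumAt_self]
    exact inv_ne_zero (pow_ne_zero _ RatFunc.X_ne_zero)
  refine ⟨fun h => hcoeff (by rw [h, Polynomial.coeff_zero]),
    le_antisymm (natDegree_orbitSumAt_le fun τ hτ => ?_)
      (Polynomial.le_natDegree_of_ne_zero hcoeff)⟩
  rcases eq_or_ne τ ν with rfl | hτν
  · rfl
  · have := two_mul_dotProduct_lt_of_mem_permSet hτ hτν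
    omega

lemma two_mul_natDegree_orbitSumAt_lt {ν κ : Fin n → ℕ} (h : ν ∉ permSet κ) :
    2 * (orbitSumAt ν κ).natDegree < ν ⬝ᵥ ν + κ ⬝ᵥ κ := by
  have hlt (τ) (hτ : τ ∈ permSet κ) : 2 * (τ ⬝ᵥ ν) < κ ⬝ᵥ κ + ν ⬝ᵥ ν :=
    two_mul_dotProduct_lt_of_mem_permSet hτ (ne_of_mem_of_not_mem hτ h)
  have hpos := hlt κ (self_mem_permSet κ)
  have := natDegree_orbitSumAt_le (ν := ν) (κ := κ) (B := (ν ⬝ᵥ ν + κ ⬝ᵥ κ - 1) / 2)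
    fun τ hτ => by
      have := hlt τ hτ
      omega
  omega

lemma det_orbitSumAt_ne_zero (d : ℕ) :
    (Matrix.of fun ν κ : partitionsWtLE n d => orbitSumAt (ν : Fin n → ℕ) κ).det ≠ 0 := by
  have hpart (ν : partitionsWtLE n d) : IsPartition (ν : Fin n → ℕ) :=
    (mem_partitionsWtLE.1 ν.2).1
  refine Matrix.det_ne_zero_of_two_mul_natDegree_lt _ (fun ν => (ν : Fin n → ℕ) ⬝ᵥ ν)
    (fun ν => orbitSumAt_self_ne_zero_and_natDegree (ν : Fin n → ℕ)) fun ν κ hνκ => ?_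
  have hne : (ν : Fin n → ℕ) ∉ permSet κ := fun h =>
    hνκ (Subtype.ext (IsPartition.eq_of_mem_permSet (hpart ν) (hpart κ) (self_mem_permSet _) h))
  exact two_mul_natDegree_orbitSumAt_lt hne

theorem eq_zero_of_eval_mubar_eq_zero {f : MvPolynomial (Fin n) KK} (hf : f.IsSymmetric) {d : ℕ}
    (hd : f.totalDegree ≤ d) (hv : ∀ ν, IsPartition ν → wt ν ≤ d → eval (mubar ν) f = 0) :
    f = 0 := by
  set N := Matrix.of fun ν κ : partitionsWtLE n d => orbitSumAt (ν : Fin n → ℕ) κ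
  set M := (algebraMap (Polynomial kk) KK).mapMatrix N
  have hM : M.det ≠ 0 := by
    rw [← RingHom.map_det]
    exact (map_ne_zero_iff _ (IsFractionRing.injective _ _)).2 (det_orbitSumAt_ne_zero d)
  have hMc : M.mulVec (fun κ => f.coeff (toMono κ)) = 0 := by
    ext ν
    have h := hv ν (mem_partitionsWtLE.1 ν.2).1 (mem_partitionsWtLE.1 ν.2).2
    rw [hf.eq_sum_orbitSum hd, map_sum, ← Finset.sum_coe_sort] at h
    simpa [M, N, Matrix.mulVec, dotProduct, smul_eval, eval_mubar_orbitSum, mul_comm] using h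
  rw [hf.eq_sum_orbitSum hd]
  refine Finset.sum_eq_zero fun κ hκ => ?_
  have hcoeff : f.coeff (toMono κ) = 0 :=
    congrFun (Matrix.eq_zero_of_mulVec_eq_zero hM hMc) ⟨κ, hκ⟩
  rw [hcoeff, zero_smul]

theorem eval_mubar_smul_eq_eval_mubar_smul {f g : MvPolynomial (Fin n) KK} (hf : f.IsSymmetric)
    (hg : g.IsSymmetric) {d : ℕ} (hfd : f.totalDegree ≤ d) (hgd : g.totalDegree ≤ d)
    {lam : Fin n → ℕ}
    (hfv : ∀ ν, IsPartition ν → ν ≠ lam → wt ν ≤ d → eval (mubar ν) f = 0)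
    (hgv : ∀ ν, IsPartition ν → ν ≠ lam → wt ν ≤ d → eval (mubar ν) g = 0) :
    eval (mubar lam) f • g = eval (mubar lam) g • f := by
  refine sub_eq_zero.1 <|
    eq_zero_of_eval_mubar_eq_zero (d := d) ((hg.smul _).sub (hf.smul _)) ?_ ?_
  · exact (totalDegree_sub _ _).trans (max_le ((totalDegree_smul_le _ _).trans hgd)
      ((totalDegree_smul_le _ _).trans hfd))
  intro ν hν hνd
  simp only [map_sub, smul_eval]
  rcases eq_or_ne ν lam with rfl | hνlam
  · ring
  · rw [hfv ν hν hνlam hνd, hgv ν hν hνlam hνd, mul_zero, mul_zero, sub_zero]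

end InterpolationMacdonald

open InterpolationMacdonald

theorem interpolation_macdonald_unique_general (n : ℕ)
    (lam : Fin n → ℕ)
    (P P' : MvPolynomial (Fin n) KK)
    (hP : IsIntMacdonald lam P) (hP' : IsIntMacdonald lam P') :
    P = P' := by
  obtain ⟨hs, hdeg, hcoeff, hvan⟩ := hP
  obtain ⟨hs', hdeg', hcoeff', hvan'⟩ := hP'
  have hnonzero : eval (mubar lam) P ≠ 0 := by
    intro h
    refine one_ne_zero (hcoeff.symm.trans ?_)
    rw [eq_zero_of_eval_mubar_eq_zero hs hdeg fun ν hν hνd => ?_, coeff_zero]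
    rcases eq_or_ne ν lam with rfl | hνlam
    exacts [h, hvan ν hν hνlam hνd]
  have hprop := eval_mubar_smul_eq_eval_mubar_smul hs (hs.sub hs') hdeg
    ((totalDegree_sub _ _).trans (max_le hdeg hdeg')) hvan fun ν hν hνlam hνd => by
      rw [map_sub, hvan ν hν hνlam hνd, hvan' ν hν hνlam hνd, sub_self]
  have hzero : eval (mubar lam) (P - P') = 0 := by
    have := congrArg (coeff (toMono lam)) hprop
    simp only [coeff_smul, coeff_sub, hcoeff, hcoeff', sub_self, smul_eq_mul, mul_zero,
      mul_one] at this
    exact this.symm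
  rwa [hzero, zero_smul, smul_eq_zero_iff_right hnonzero, sub_eq_zero] at hprop

/-- Uniqueness of the interpolation Macdonald polynomial (Knop–Sahi). -/
theorem interpolation_macdonald_unique (n : ℕ) (hn : 0 < n)
    (lam : Fin n → ℕ) (hlam : IsPartition lam)
    (P P' : MvPolynomial (Fin n) KK)
    (hP : IsIntMacdonald lam P) (hP' : IsIntMacdonald lam P') :
    P = P' :=
  interpolation_macdonald_unique_general n lam P P' hP hP'
end
end

section
/- Uniqueness of the interpolation ASEP polynomial: Let λ be a partition with |λ| = d and let μ ∈ Sₙ(λ). If F and F′ are two polynomials in K[x₁,…,xₙ] that each satisfy the defining conditions of the interpolation ASEP polynomial F*_μ, then F = F′. -/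
open MvPolynomial

noncomputable section

/-!
Put `G = F - F'`. Its coefficients vanish on `Sₙ(λ)` and its degree is at most `|λ|`, so every
exponent `ν` of `G` is a composition with `|ν| ≤ |λ|` and `ν ∉ Sₙ(λ)`; hence `G(ν̄) = 0` for every
`ν` in the support of `G`. The matrix `(ν̄^a)_{ν,a}` indexed by that support has entries
`t^{-∑ kᵢ(ν) aᵢ} q^{⟨ν,a⟩}`, and since `2⟨ν,a⟩ < |ν|² + |a|²` for `ν ≠ a`, only the identity
permutation contributes to the top `q`-degree `∑ |ν|²` of its determinant. The matrix is
therefore invertible, and the coefficient vector of `G`, which it kills, is zero.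
-/

lemma two_mul_sum_mul_lt_of_ne {ι : Type*} [Fintype ι] {x y : ι → ℕ}
    (hxy : x ≠ y) : 2 * ∑ i, x i * y i < ∑ i, x i * x i + ∑ i, y i * y i := by
  obtain ⟨j, hj⟩ := Function.ne_iff.mp hxy
  rw [Finset.mul_sum, ← Finset.sum_add_distrib]
  refine Finset.sum_lt_sum (fun i _ => ?_) ⟨j, Finset.mem_univ j, ?_⟩
  · nlinarith [sq_nonneg ((x i : ℤ) - y i)]
  · have : (x j : ℤ) - y j ≠ 0 := sub_ne_zero.mpr (by exact_mod_cast hj)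
    nlinarith [sq_pos_of_ne_zero this]

namespace Matrix

variable {R ι : Type*} [CommRing R] [IsDomain R] [Fintype ι] [DecidableEq ι]

/-- Only the identity permutation reaches the `X`-degree `∑ i, e i i`. -/
lemma det_C_mul_X_pow_ne_zero (f : ι → ι → R) (e : ι → ι → ℕ) (hf : ∀ i, f i i ≠ 0)
    (he : ∀ i j, i ≠ j → 2 * e i j < e i i + e j j) :
    (of fun i j => Polynomial.C (f i j) * Polynomial.X ^ e i j).det ≠ 0 := by
  have hprod (σ : Equiv.Perm ι) : ∏ i, Polynomial.C (f (σ i) i) * Polynomial.X ^ e (σ i) i =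
      Polynomial.C (∏ i, f (σ i) i) * Polynomial.X ^ ∑ i, e (σ i) i := by
    rw [Finset.prod_mul_distrib, map_prod, Finset.prod_pow_eq_pow_sum]
  have hdeg (σ : Equiv.Perm ι) (hσ : σ ≠ 1) : ∑ i, e (σ i) i < ∑ i, e i i := by
    obtain ⟨j, hj⟩ : ∃ j, σ j ≠ j := by
      by_contra! h
      exact hσ (Equiv.ext h)
    have hle (i : ι) : 2 * e (σ i) i ≤ e (σ i) (σ i) + e i i := by
      rcases eq_or_ne (σ i) i with h | h
      · rw [h]; omega
      · exact (he _ _ h).le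
    have hlt := Finset.sum_lt_sum (fun i _ => hle i) ⟨j, Finset.mem_univ j, he _ _ hj⟩
    rw [← Finset.mul_sum, Finset.sum_add_distrib, Equiv.sum_comp σ (fun i => e i i)] at hlt
    omega
  have hcoeff : (of fun i j => Polynomial.C (f i j) * Polynomial.X ^ e i j).det.coeff
      (∑ i, e i i) = ∏ i, f i i := by
    rw [det_apply, Polynomial.finsetSum_coeff, Finset.sum_eq_single_of_mem 1 (Finset.mem_univ _)]
    · simp only [of_apply, Equiv.Perm.sign_one, one_smul]
      rw [hprod 1, Polynomial.coeff_C_mul_X_pow]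
      exact if_pos rfl
    · intro σ _ hσ
      simp only [of_apply, Polynomial.coeff_smul, hprod σ, Polynomial.coeff_C_mul_X_pow,
        if_neg (hdeg σ hσ).ne', smul_zero]
  intro h
  rw [h, Polynomial.coeff_zero] at hcoeff
  exact Finset.prod_ne_zero_iff.mpr (fun i _ => hf i) hcoeff.symm

end Matrix

lemma RatFunc.det_C_mul_X_pow_ne_zero {k ι : Type*} [Field k] [Fintype ι] [DecidableEq ι]
    (f : ι → ι → k) (e : ι → ι → ℕ) (hf : ∀ i, f i i ≠ 0)
    (he : ∀ i j, i ≠ j → 2 * e i j < e i i + e j j) :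
    (Matrix.of fun i j => RatFunc.C (f i j) * RatFunc.X ^ e i j).det ≠ 0 := by
  have hmap : (Matrix.of fun i j => RatFunc.C (f i j) * RatFunc.X ^ e i j) =
      (algebraMap (Polynomial k) (RatFunc k)).mapMatrix
        (Matrix.of fun i j => Polynomial.C (f i j) * Polynomial.X ^ e i j) := by
    ext i j
    simp [RatFunc.algebraMap_C, RatFunc.algebraMap_X]
  rw [hmap, ← RingHom.map_det]
  exact (map_ne_zero_iff _ (RatFunc.algebraMap_injective k)).mpr
    (Matrix.det_C_mul_X_pow_ne_zero f e hf he)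

lemma prod_mubar_pow {n : ℕ} (ν a : Fin n → ℕ) :
    ∏ i, mubar ν i ^ a i =
      RatFunc.C (tk⁻¹ ^ ∑ i, kStat ν i * a i) * RatFunc.X ^ ∑ i, ν i * a i := by
  have hfactor (i : Fin n) : mubar ν i ^ a i =
      RatFunc.C tk⁻¹ ^ (kStat ν i * a i) * RatFunc.X ^ (ν i * a i) := by
    rw [mubar, tK, qK, zpow_neg, zpow_natCast, map_inv₀]
    ring
  simp only [hfactor, Finset.prod_mul_distrib, Finset.prod_pow_eq_pow_sum, map_pow]

theorem MvPolynomial.eq_zero_of_eval_mubar_support_eq_zero {n : ℕ} (G : MvPolynomial (Fin n) KK)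
    (hG : ∀ m ∈ G.support, eval (mubar ⇑m) G = 0) : G = 0 := by
  classical
  let A : Matrix G.support G.support KK := Matrix.of fun ν a => ∏ i, mubar ⇑ν.1 i ^ a.1 i
  have hA : A.det ≠ 0 := by
    simp only [A, prod_mubar_pow]
    refine RatFunc.det_C_mul_X_pow_ne_zero _ _
      (fun _ => pow_ne_zero _ (inv_ne_zero RatFunc.X_ne_zero))
      (fun ν a hνa => two_mul_sum_mul_lt_of_ne fun h => hνa (Subtype.ext (DFunLike.coe_injective h)))
  have hker : A.mulVec (fun a => G.coeff a.1) = 0 := by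
    funext ν
    rw [Pi.zero_apply, ← hG ν.1 ν.2, eval_eq', ← Finset.sum_coe_sort G.support]
    simp only [Matrix.mulVec, dotProduct, A, Matrix.of_apply, mul_comm]
  ext m
  by_contra hm
  exact hm (congrFun (Matrix.eq_zero_of_mulVec_eq_zero hA hker) ⟨m, mem_support_iff.mpr hm⟩)

theorem interpolation_asep_unique_general (n : ℕ)
    (lam : Fin n → ℕ)
    (μ : Fin n → ℕ)
    (F F' : MvPolynomial (Fin n) KK)
    (hF : IsIntASEP lam μ F) (hF' : IsIntASEP lam μ F') :
    F = F' := by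
  obtain ⟨hFdeg, hFcoeff, hFvan⟩ := hF
  obtain ⟨hF'deg, hF'coeff, hF'van⟩ := hF'
  rw [← sub_eq_zero]
  refine eq_zero_of_eval_mubar_support_eq_zero _ fun m hm => ?_
  have hwt : wt ⇑m ≤ wt lam := by
    have := (le_totalDegree hm).trans ((totalDegree_sub F F').trans (max_le hFdeg hF'deg))
    rwa [Finsupp.sum_fintype _ _ (fun _ => rfl)] at this
  have hperm : ⇑m ∉ permSet lam := fun hτ => mem_support_iff.mp hm <| by
    rw [coeff_sub, ← show toMono ⇑m = m from Finsupp.equivFunOnFinite_symm_coe m,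
      hFcoeff _ hτ, hF'coeff _ hτ, sub_self]
  rw [map_sub, hFvan _ hwt hperm, hF'van _ hwt hperm, sub_self]

/-- Uniqueness of the interpolation ASEP polynomial. -/
theorem interpolation_asep_unique (n : ℕ) (hn : 0 < n)
    (lam : Fin n → ℕ) (hlam : IsPartition lam)
    (μ : Fin n → ℕ) (hμ : μ ∈ permSet lam)
    (F F' : MvPolynomial (Fin n) KK)
    (hF : IsIntASEP lam μ F) (hF' : IsIntASEP lam μ F') :
    F = F' :=
  interpolation_asep_unique_general n lam μ F F' hF hF'
end
end

section
/- Symmetrization identity: Let λ be a partition. Suppose P ∈ K[x₁,…,xₙ] satisfies the defining conditions of the interpolation Macdonald polynomial P*_λ, and suppose (F_μ)_{μ ∈ Sₙ(λ)} is a family of polynomials in K[x₁,…,xₙ] such that for each μ ∈ Sₙ(λ), F_μ satisfies the defining conditions of the interpolation ASEP polynomial F*_μ. Then P = Σ_{μ ∈ Sₙ(λ)} F_μ. -/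
open MvPolynomial

/-!
Put `G = P - ∑ F_μ`. Both `P` and `∑ F_μ` have degree at most `|λ|` and coefficient `1` at every
`x^τ` with `τ ∈ Sₙ(λ)`, so every exponent `m` in the support of `G` has `|m| ≤ |λ|` and
`m ∉ Sₙ(λ)`. The `F_μ` vanish at such `m̄` by definition, and so does `P`: stably sorting `m`
into a partition `ν` permutes `m̄` into `ν̄`, and `P` is symmetric.

Hence `G` vanishes at `m̄` for every `m` in its support, and this forces `G = 0`. Indeed, as
polynomials in `q`, the entries of the matrix `(∏ᵢ m̄ᵢ ^ μᵢ)_{m,μ}` are monomials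
`c_{m,μ} q^{⟨m,μ⟩}`, and `∑ₘ ⟨σ m, m⟩ < ∑ₘ ⟨m, m⟩` for every nontrivial permutation `σ` of the
support, so the determinant has the nonzero coefficient `∏ₘ c_{m,m}` in degree `∑ₘ ⟨m, m⟩`.
-/

open Matrix

theorem sum_dotProduct_perm_lt_sum_dotProduct_self {ι κ : Type*} [Fintype ι] [Fintype κ]
    {v : ι → κ → ℕ} (hv : Function.Injective v) {σ : Equiv.Perm ι} (hσ : σ ≠ 1) :
    ∑ x, v (σ x) ⬝ᵥ v x < ∑ x, v x ⬝ᵥ v x := by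
  set w : ι → κ → ℤ := fun x i => v x i
  have hcast : ∀ x y, ((v x ⬝ᵥ v y : ℕ) : ℤ) = w x ⬝ᵥ w y := fun x y =>
    RingHom.map_dotProduct (Nat.castRingHom ℤ) _ _
  have hw : Function.Injective w := fun x y h =>
    hv (funext fun i => Nat.cast_injective (congrFun h i))
  obtain ⟨x₀, hx₀⟩ : ∃ x, σ x ≠ x := by simpa [Equiv.ext_iff] using hσ
  have hpos : 0 < ∑ x, (w x - w (σ x)) ⬝ᵥ (w x - w (σ x)) := by
    refine Finset.sum_pos' (fun x _ => Fintype.sum_nonneg fun _ => mul_self_nonneg _)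
      ⟨x₀, Finset.mem_univ _, ?_⟩
    refine lt_of_le_of_ne (Fintype.sum_nonneg fun _ => mul_self_nonneg _) (Ne.symm ?_)
    rw [Ne, dotProduct_self_eq_zero, sub_eq_zero]
    exact fun h => hx₀ (hw h).symm
  have hσsum : ∑ x, w (σ x) ⬝ᵥ w (σ x) = ∑ x, w x ⬝ᵥ w x :=
    Equiv.sum_comp σ fun x => w x ⬝ᵥ w x
  simp only [sub_dotProduct, dotProduct_sub, Finset.sum_sub_distrib,
    dotProduct_comm _ (w (σ _))] at hpos
  zify
  simp only [hcast]
  linarith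

theorem Matrix.det_of_monomial_entries_ne_zero {R ι : Type*} [CommRing R] [IsDomain R]
    [Fintype ι] [DecidableEq ι] (c : ι → ι → R) (d : ι → ι → ℕ) (hc : ∀ i, c i i ≠ 0)
    (hd : ∀ σ : Equiv.Perm ι, σ ≠ 1 → ∑ i, d (σ i) i < ∑ i, d i i) :
    (of fun i j => Polynomial.C (c i j) * Polynomial.X ^ d i j).det ≠ 0 := by
  have hterm : ∀ σ : Equiv.Perm ι, (Equiv.Perm.sign σ •
      ∏ i, Polynomial.C (c (σ i) i) * Polynomial.X ^ d (σ i) i).coeff (∑ i, d i i) =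
      if σ = 1 then ∏ i, c i i else 0 := by
    intro σ
    rw [Finset.prod_mul_distrib, ← map_prod, Finset.prod_pow_eq_pow_sum, Units.smul_def,
      Polynomial.coeff_smul, Polynomial.coeff_C_mul_X_pow]
    split_ifs with hdeg hσ hσ
    · simp [hσ]
    · exact absurd (hdeg ▸ hd σ hσ) (lt_irrefl _)
    · simp [hσ] at hdeg
    · simp
  intro h
  have := congrArg (Polynomial.coeff · (∑ i, d i i)) h
  simp only [det_apply, of_apply, Polynomial.finsetSum_coeff, hterm, Finset.sum_ite_eq',
    Finset.mem_univ, if_true, Polynomial.coeff_zero] at this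
  exact Finset.prod_ne_zero_iff.mpr (fun i _ => hc i) this

theorem Polynomial.prod_C_mul_X_pow_pow {R ι : Type*} [CommSemiring R] [Fintype ι]
    (a : ι → R) (e m : ι → ℕ) :
    ∏ i, (C (a i) * X ^ e i) ^ m i = C (∏ i, a i ^ m i) * X ^ (e ⬝ᵥ m) := by
  simp only [mul_pow, Finset.prod_mul_distrib, ← pow_mul, Finset.prod_pow_eq_pow_sum, map_prod,
    map_pow, dotProduct]

open Polynomial in
theorem MvPolynomial.eq_zero_of_eval_C_mul_X_pow_eq_zero {k σ : Type*} [Field k] [Fintype σ]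
    (c : (σ →₀ ℕ) → σ → k) (hc : ∀ m i, c m i ≠ 0) {G : MvPolynomial σ (RatFunc k)}
    (h : ∀ m ∈ G.support, eval (fun i =>
      algebraMap k[X] (RatFunc k) (Polynomial.C (c m i) * Polynomial.X ^ m i)) G = 0) :
    G = 0 := by
  classical
  let M : Matrix G.support G.support k[X] := of fun ν μ =>
    Polynomial.C (∏ i, c ν i ^ (μ : σ →₀ ℕ) i) * Polynomial.X ^ (⇑(ν : σ →₀ ℕ) ⬝ᵥ ⇑(μ : σ →₀ ℕ))
  have hdet : M.det ≠ 0 :=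
    det_of_monomial_entries_ne_zero (fun ν μ : G.support => ∏ i, c ν i ^ (μ : σ →₀ ℕ) i)
      (fun ν μ : G.support => ⇑(ν : σ →₀ ℕ) ⬝ᵥ ⇑(μ : σ →₀ ℕ))
      (fun ν => Finset.prod_ne_zero_iff.mpr fun i _ => pow_ne_zero _ (hc ν i))
      fun τ hτ => sum_dotProduct_perm_lt_sum_dotProduct_self
        (fun ν μ hνμ => Subtype.ext (DFunLike.coe_injective hνμ)) hτ
  have hdet' : (M.map (algebraMap k[X] (RatFunc k))).det ≠ 0 := by
    rw [← RingHom.mapMatrix_apply, ← RingHom.map_det]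
    exact (map_ne_zero_iff _ (IsFractionRing.injective k[X] (RatFunc k))).mpr hdet
  have hcoeff : (fun μ : G.support => G.coeff μ) = 0 := by
    refine eq_zero_of_mulVec_eq_zero hdet' ?_
    ext ν
    have := h ν ν.2
    simp only [eval_eq', ← map_pow, ← map_prod, prod_C_mul_X_pow_pow] at this
    simp only [mulVec, dotProduct, map_apply, Pi.zero_apply]
    rw [← this, ← Finset.sum_coe_sort G.support]
    exact Finset.sum_congr rfl fun μ _ => mul_comm _ _
  ext m
  by_contra hm
  exact hm (congrFun hcoeff ⟨m, mem_support_iff.mpr hm⟩)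

section

variable {n : ℕ}

theorem wt_comp_perm (ν : Fin n → ℕ) (π : Equiv.Perm (Fin n)) : wt (ν ∘ π) = wt ν :=
  Equiv.sum_comp π ν

theorem toMono_coe (m : Fin n →₀ ℕ) : toMono ⇑m = m :=
  Finsupp.equivFunOnFinite.symm_apply_apply m

theorem wt_coe (m : Fin n →₀ ℕ) : wt ⇑m = m.sum fun _ e => e :=
  (Finsupp.sum_fintype m (fun _ e => e) fun _ => rfl).symm

theorem mem_permSet_iff {lam ν : Fin n → ℕ} :
    ν ∈ permSet lam ↔ ∃ σ : Equiv.Perm (Fin n), ν = lam ∘ σ := by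
  simp [permSet, eq_comm]

theorem kStat_eq_card (μ : Fin n → ℕ) (i : Fin n) :
    kStat μ i = (Finset.univ.filter fun j => (j < i ∧ μ i < μ j) ∨ (i < j ∧ μ i ≤ μ j)).card := by
  rw [kStat, Finset.filter_or, Finset.card_union_of_disjoint]
  exact Finset.disjoint_filter.mpr fun j _ hlt hgt => lt_asymm hlt.1 hgt.1

theorem kStat_comp_perm {μ : Fin n → ℕ} {π : Equiv.Perm (Fin n)}
    (hπ : ∀ a b, a < b → μ (π a) = μ (π b) → π a < π b) (i : Fin n) :
    kStat (μ ∘ π) i = kStat μ (π i) := by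
  rw [kStat_eq_card, kStat_eq_card]
  refine Finset.card_equiv π fun j => ?_
  simp only [Finset.mem_filter, Finset.mem_univ, true_and, Function.comp_apply]
  -- if `μ (π i) = μ (π j)` then `hπ` gives `i < j ↔ π i < π j`
  have := hπ i j
  have := hπ j i
  grind [π.injective.eq_iff]

theorem mubar_comp_perm {μ : Fin n → ℕ} {π : Equiv.Perm (Fin n)}
    (hπ : ∀ a b, a < b → μ (π a) = μ (π b) → π a < π b) :
    mubar (μ ∘ π) = mubar μ ∘ π := by
  funext i
  simp only [mubar, Function.comp_apply, kStat_comp_perm hπ]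

theorem exists_isPartition_mubar_eq_comp (ν : Fin n → ℕ) :
    ∃ (lam : Fin n → ℕ) (π : Equiv.Perm (Fin n)),
      IsPartition lam ∧ ν = lam ∘ π ∧ mubar ν = mubar lam ∘ π := by
  set σ := Tuple.sort (OrderDual.toDual ∘ ν)
  obtain ⟨hmono, hstable⟩ := Tuple.eq_sort_iff.mp (rfl : σ = σ)
  refine ⟨ν ∘ σ, σ.symm, fun i j hij => hmono hij, ?_, ?_⟩
  · funext i; simp
  · rw [mubar_comp_perm (μ := ν) hstable]
    funext i; simp

theorem MvPolynomial.IsSymmetric.coeff_toMono_comp {R : Type*} [CommSemiring R]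
    {P : MvPolynomial (Fin n) R} (hP : P.IsSymmetric) (μ : Fin n → ℕ) (σ : Equiv.Perm (Fin n)) :
    P.coeff (toMono (μ ∘ σ)) = P.coeff (toMono μ) := by
  have hmap : Finsupp.mapDomain σ.symm (toMono μ) = toMono (μ ∘ σ) := by
    ext i
    simp [Finsupp.mapDomain_equiv_apply, toMono]
  rw [← hmap, ← coeff_rename_mapDomain _ σ.symm.injective P (toMono μ), hP]

theorem MvPolynomial.IsSymmetric.eval_comp {R : Type*} [CommSemiring R]
    {P : MvPolynomial (Fin n) R} (hP : P.IsSymmetric) (x : Fin n → R) (σ : Equiv.Perm (Fin n)) :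
    eval (x ∘ σ) P = eval x P := by
  rw [← eval_rename, hP σ]

theorem IsIntMacdonald.eval_mubar_eq_zero {lam : Fin n → ℕ} {P : MvPolynomial (Fin n) KK}
    (hP : IsIntMacdonald lam P) {ν : Fin n → ℕ} (hν : ν ∉ permSet lam) (hwt : wt ν ≤ wt lam) :
    eval (mubar ν) P = 0 := by
  obtain ⟨ν', π, hν', rfl, hmubar⟩ := exists_isPartition_mubar_eq_comp ν
  have hne : ν' ≠ lam := by
    rintro rfl
    exact hν (mem_permSet_iff.mpr ⟨π, rfl⟩)
  rw [hmubar, hP.1.eval_comp]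
  exact hP.2.2.2 ν' hν' hne (wt_comp_perm ν' π ▸ hwt)

theorem IsIntMacdonald.coeff_toMono_of_mem_permSet {lam : Fin n → ℕ}
    {P : MvPolynomial (Fin n) KK} (hP : IsIntMacdonald lam P) {τ : Fin n → ℕ}
    (hτ : τ ∈ permSet lam) : P.coeff (toMono τ) = 1 := by
  obtain ⟨σ, rfl⟩ := mem_permSet_iff.mp hτ
  rw [hP.1.coeff_toMono_comp, hP.2.2.1]

theorem coeff_sum_of_isIntASEP {lam : Fin n → ℕ} {F : (Fin n → ℕ) → MvPolynomial (Fin n) KK}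
    (hF : ∀ μ ∈ permSet lam, IsIntASEP lam μ (F μ)) {τ : Fin n → ℕ} (hτ : τ ∈ permSet lam) :
    (∑ μ ∈ permSet lam, F μ).coeff (toMono τ) = 1 := by
  rw [coeff_sum, Finset.sum_congr rfl fun μ hμ => (hF μ hμ).2.1 τ hτ, Finset.sum_ite_eq,
    if_pos hτ]

theorem mubar_eq_algebraMap (ν : Fin n → ℕ) :
    mubar ν = fun i => algebraMap (Polynomial kk) KK
      (Polynomial.C (tk ^ (-(kStat ν i : ℤ))) * Polynomial.X ^ ν i) := by
  funext i
  rw [mubar, mul_comm, map_mul, map_pow, RatFunc.algebraMap_C, RatFunc.algebraMap_X, tK, qK,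
    map_zpow₀]

theorem eq_zero_of_eval_mubar_eq_zero {G : MvPolynomial (Fin n) KK}
    (h : ∀ m ∈ G.support, eval (mubar ⇑m) G = 0) : G = 0 :=
  eq_zero_of_eval_C_mul_X_pow_eq_zero (fun m i => tk ^ (-(kStat ⇑m i : ℤ)))
    (fun _ _ => zpow_ne_zero _ RatFunc.X_ne_zero)
    fun m hm => by simpa only [mubar_eq_algebraMap] using h m hm

end

theorem interpolation_symmetrization_general (n : ℕ) (lam : Fin n → ℕ)
    (P : MvPolynomial (Fin n) KK) (hP : IsIntMacdonald lam P)
    (F : (Fin n → ℕ) → MvPolynomial (Fin n) KK)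
    (hF : ∀ μ ∈ permSet lam, IsIntASEP lam μ (F μ)) :
    P = ∑ μ ∈ permSet lam, F μ := by
  set G := P - ∑ μ ∈ permSet lam, F μ
  have hdeg : G.totalDegree ≤ wt lam :=
    (totalDegree_sub _ _).trans <| max_le hP.2.1 <|
      (totalDegree_finsetSum _ _).trans <| Finset.sup_le fun μ hμ => (hF μ hμ).1
  have hcoeff : ∀ τ ∈ permSet lam, G.coeff (toMono τ) = 0 := fun τ hτ => by
    rw [coeff_sub, hP.coeff_toMono_of_mem_permSet hτ, coeff_sum_of_isIntASEP hF hτ, sub_self]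
  refine sub_eq_zero.mp (eq_zero_of_eval_mubar_eq_zero fun m hm => ?_)
  have hwt : wt ⇑m ≤ wt lam := wt_coe m ▸ (le_totalDegree hm).trans hdeg
  have hν : ⇑m ∉ permSet lam := fun h =>
    mem_support_iff.mp hm (toMono_coe m ▸ hcoeff _ h)
  rw [map_sub, map_sum, hP.eval_mubar_eq_zero hν hwt,
    Finset.sum_eq_zero fun μ hμ => (hF μ hμ).2.2 _ hwt hν, sub_zero]

/-- Symmetrization identity `P*_λ = Σ_{μ ∈ Sₙ(λ)} F*_μ`. -/
theorem interpolation_symmetrization (n : ℕ) (hn : 0 < n)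
    (lam : Fin n → ℕ) (hlam : IsPartition lam)
    (P : MvPolynomial (Fin n) KK) (hP : IsIntMacdonald lam P)
    (F : (Fin n → ℕ) → MvPolynomial (Fin n) KK)
    (hF : ∀ μ ∈ permSet lam, IsIntASEP lam μ (F μ)) :
    P = ∑ μ ∈ permSet lam, F μ :=
  interpolation_symmetrization_general n lam P hP F hF
end

section
/- Knop–Sahi recurrence: Let μ ∈ ℕⁿ be a composition and let μ̂ = (μₙ + 1, μ₁, …, μ_{n−1}). Suppose E satisfies the defining conditions of the nonsymmetric interpolation Macdonald polynomial E*_μ and E′ satisfies the defining conditions of E*_{μ̂}. Then E′(x₁,…,xₙ) = (x₁ − 1/t^{n−1}) · q^{μₙ} · E(x₂, x₃, …, xₙ, x₁/q), where the right-hand side denotes the polynomial obtained from E by the substitution xᵢ ↦ x_{i+1} for 1 ≤ i ≤ n−1 and xₙ ↦ q^{−1}·x₁. -/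
open MvPolynomial

noncomputable section

/-!
The right-hand side satisfies the defining conditions of `E*_{μ̂}`: it has degree `≤ |μ| + 1`,
its coefficient of `x^{μ̂}` comes from `x₁ · q^{μₙ} · (x₁/q)^{μₙ} x₂^{μ₁} ⋯`, and for `ν ≠ μ̂`
either `ν₁ = 0`, so that `ν̄₁ = t^{1-n}` kills the linear factor, or `ν = κ̂` with `κ ≠ μ`, and
the substitution carries `κ̂̄` to `κ̄`, where `E` vanishes.

So it suffices that the defining conditions determine a polynomial: if `deg f ≤ d`, the
coefficient of `x^ν` in `f` vanishes for `ν` in a set `S` of compositions of weight `d`, and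
`f(ν̄) = 0` for all other `|ν| ≤ d`, then `f = 0`. By induction on `n + d`: the points with
`ν₁ = 0` are `(t^{1-n}, κ̄)`, so the induction hypothesis in `n - 1` variables shows that
`f(t^{1-n}, x₂, …, xₙ) = 0`, i.e. `f = (x₁ - t^{1-n}) g`. Then `g` vanishes at every `κ̂̄`,
so `g(q xₙ, x₁, …, xₙ₋₁)` vanishes at every `κ̄`; it has degree `≤ d - 1`, hence is zero.
-/

lemma finRotate_symm_zero {n : ℕ} : (finRotate (n + 1)).symm 0 = Fin.last n :=
  (Equiv.symm_apply_eq _).mpr finRotate_last.symm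

lemma finRotate_symm_succ {n : ℕ} (j : Fin n) : (finRotate (n + 1)).symm j.succ = j.castSucc :=
  (Equiv.symm_apply_eq _).mpr (by rw [finRotate_apply, Fin.coeSucc_eq_succ])


namespace MvPolynomial

section CommSemiring

variable {R : Type*} [CommSemiring R] {σ τ : Type*}

lemma eval_aeval (v : τ → R) (s : σ → MvPolynomial τ R) (p : MvPolynomial σ R) :
    eval v (aeval s p) = eval (fun i => eval v (s i)) p := by
  rw [aeval_eq_bind₁]
  exact eval₂Hom_bind₁ _ _ _ _

lemma totalDegree_aeval_le {s : σ → MvPolynomial τ R} (hs : ∀ i, (s i).totalDegree ≤ 1)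
    (p : MvPolynomial σ R) : (aeval s p).totalDegree ≤ p.totalDegree := by
  conv_lhs => rw [p.as_sum, map_sum]
  refine (totalDegree_finsetSum _ _).trans (Finset.sup_le fun m hm => ?_)
  rw [aeval_monomial, algebraMap_eq]
  refine (totalDegree_mul _ _).trans ?_
  rw [totalDegree_C, zero_add]
  refine (totalDegree_finsetProd _ _).trans ((Finset.sum_le_sum fun i _ => ?_).trans
    (le_totalDegree hm))
  exact (totalDegree_pow _ _).trans ((Nat.mul_le_mul_left _ (hs i)).trans_eq (mul_one _))

lemma totalDegree_monomial_single_le (i : σ) (c : R) :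
    (monomial (Finsupp.single i 1) c).totalDegree ≤ 1 :=
  (totalDegree_monomial_le _ _).trans_eq (Finsupp.sum_single_index rfl)

end CommSemiring

section CommRing

variable {R : Type*} [CommRing R] {σ : Type*}

lemma coeff_single_add_X_sub_C_mul {g : MvPolynomial σ R} {m : σ →₀ ℕ}
    (hg : g.totalDegree ≤ m.degree) (i : σ) (c : R) :
    coeff (Finsupp.single i 1 + m) ((X i - C c) * g) = coeff m g := by
  have hdeg : g.totalDegree < (Finsupp.single i 1 + m).degree := by
    rw [map_add, Finsupp.degree_single]
    omega
  have htop : coeff (Finsupp.single i 1 + m) g = 0 := coeff_eq_zero_of_totalDegree_lt hdeg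
  rw [sub_mul, coeff_sub, coeff_X_mul, coeff_C_mul, htop, mul_zero, sub_zero]

lemma totalDegree_X_sub_C [Nontrivial R] (i : σ) (c : R) : (X i - C c).totalDegree = 1 := by
  classical
  refine le_antisymm ((totalDegree_sub_C_le _ _).trans (totalDegree_X i).le) ?_
  have h : Finsupp.single i 1 ∈ (X i - C c : MvPolynomial σ R).support := by
    rw [mem_support_iff, coeff_sub, coeff_X, if_pos rfl, coeff_C,
      if_neg (Finsupp.single_ne_zero.mpr one_ne_zero).symm, sub_zero]
    exact one_ne_zero
  simpa using le_totalDegree h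

lemma totalDegree_X_sub_C_mul [IsDomain R] (i : σ) (c : R) {g : MvPolynomial σ R} (hg : g ≠ 0) :
    ((X i - C c) * g).totalDegree = g.totalDegree + 1 := by
  have hX := totalDegree_X_sub_C i c
  have hX0 : X i - C c ≠ 0 := fun h => by simp [h] at hX
  rw [totalDegree_mul_of_isDomain hX0 hg, hX, add_comm]

variable {n : ℕ}

/-- The polynomial `f(c, x₁, …, xₙ)`. -/
def substZero (c : R) (f : MvPolynomial (Fin (n + 1)) R) : MvPolynomial (Fin n) R :=
  Polynomial.eval (C c) (finSuccEquiv R n f)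

lemma eval_substZero (c : R) (f : MvPolynomial (Fin (n + 1)) R) (v : Fin n → R) :
    eval v (substZero c f) = eval (Fin.cons c v) f := by
  rw [eval_eq_eval_mv_eval', substZero, Polynomial.eval_map, Polynomial.eval,
    Polynomial.hom_eval₂, RingHom.comp_id, eval_C]

lemma totalDegree_substZero_le (c : R) (f : MvPolynomial (Fin (n + 1)) R) :
    (substZero c f).totalDegree ≤ f.totalDegree := by
  rw [substZero, Polynomial.eval_eq_sum, Polynomial.sum]
  refine (totalDegree_finsetSum _ _).trans (Finset.sup_le fun i hi => ?_)
  refine (totalDegree_mul _ _).trans ?_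
  rw [← C_pow, totalDegree_C, add_zero]
  have := totalDegree_coeff_finSuccEquiv_add_le f i (Polynomial.mem_support_iff.mp hi)
  omega

lemma coeff_substZero_of_totalDegree_le (c : R) {f : MvPolynomial (Fin (n + 1)) R}
    {m : Fin n →₀ ℕ} (hf : f.totalDegree ≤ m.degree) :
    coeff m (substZero c f) = coeff (m.cons 0) f := by
  have hhigh : ∀ k ≠ 0, coeff (m.cons k) f = 0 := fun k hk =>
    coeff_eq_zero_of_totalDegree_lt (by
      rw [← Finsupp.degree_apply, Finsupp.degree_eq_sum, Fin.sum_univ_succ]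
      simp only [Finsupp.cons_zero, Finsupp.cons_succ, ← Finsupp.degree_eq_sum]
      omega)
  rw [substZero, Polynomial.eval_eq_sum, Polynomial.sum, coeff_sum,
    Finset.sum_eq_single 0 (fun k _ hk => ?_) (fun h0 => ?_)]
  · rw [pow_zero, mul_one, finSuccEquiv_coeff_coeff]
  · rw [← C_pow, mul_comm, coeff_C_mul, finSuccEquiv_coeff_coeff, hhigh k hk, mul_zero]
  · rw [Polynomial.notMem_support_iff] at h0
    rw [h0, zero_mul, coeff_zero]

lemma X_zero_sub_C_dvd_of_substZero_eq_zero {c : R} {f : MvPolynomial (Fin (n + 1)) R}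
    (h : substZero c f = 0) : X 0 - C c ∣ f := by
  obtain ⟨G, hG⟩ := Polynomial.dvd_iff_isRoot.mpr (show (finSuccEquiv R n f).IsRoot (C c) from h)
  refine ⟨(finSuccEquiv R n).symm G, (finSuccEquiv R n).injective ?_⟩
  rw [hG, map_mul, AlgEquiv.apply_symm_apply, map_sub, finSuccEquiv_X_zero]
  exact congrArg (fun a => (Polynomial.X - a) * G) ((finSuccEquiv R n).commutes c).symm

end CommRing

section Cycle

variable {R : Type*} [CommSemiring R] {n : ℕ}

def cycleSubst (a : R) : Fin (n + 1) → MvPolynomial (Fin (n + 1)) R :=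
  Fin.lastCases (C a * X 0) (fun j => X j.succ)

def cycleSubstInv (b : R) : Fin (n + 1) → MvPolynomial (Fin (n + 1)) R :=
  Fin.cases (C b * X (Fin.last n)) (fun j => X j.castSucc)

@[simp] lemma cycleSubst_last (a : R) : cycleSubst a (Fin.last n) = C a * X 0 := by
  simp [cycleSubst]

@[simp] lemma cycleSubst_castSucc (a : R) (j : Fin n) : cycleSubst a j.castSucc = X j.succ := by
  simp [cycleSubst]

@[simp] lemma cycleSubstInv_zero (b : R) : cycleSubstInv b 0 = C b * X (Fin.last n) := rfl

@[simp] lemma cycleSubstInv_succ (b : R) (j : Fin n) : cycleSubstInv b j.succ = X j.castSucc :=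
  rfl

lemma totalDegree_cycleSubst_le (a : R) (i : Fin (n + 1)) : (cycleSubst a i).totalDegree ≤ 1 := by
  cases i using Fin.lastCases with
  | last => rw [cycleSubst_last, C_mul_X_eq_monomial]; exact totalDegree_monomial_single_le _ _
  | cast j => rw [cycleSubst_castSucc]; exact totalDegree_monomial_single_le _ _

lemma totalDegree_cycleSubstInv_le (b : R) (i : Fin (n + 1)) :
    (cycleSubstInv b i).totalDegree ≤ 1 := by
  cases i using Fin.cases with
  | zero => rw [cycleSubstInv_zero, C_mul_X_eq_monomial]; exact totalDegree_monomial_single_le _ _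
  | succ j => exact totalDegree_monomial_single_le _ _

lemma aeval_cycleSubst_aeval_cycleSubstInv {a b : R} (hab : a * b = 1)
    (p : MvPolynomial (Fin (n + 1)) R) : aeval (cycleSubst a) (aeval (cycleSubstInv b) p) = p := by
  rw [← AlgHom.comp_apply, ← AlgHom.id_apply (R := R) p]
  congr 1
  refine algHom_ext fun i => ?_
  cases i using Fin.cases with
  | zero => simp [← mul_assoc, ← C_mul, mul_comm b, hab]
  | succ j => simp

lemma aeval_cycleSubst_monomial (a : R) (m : Fin (n + 1) →₀ ℕ) (c : R) :
    aeval (cycleSubst a) (monomial m c) =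
      monomial (m.mapDomain (finRotate _)) (a ^ m (Fin.last n) * c) := by
  rw [aeval_monomial, monomial_eq, Finsupp.prod_fintype _ _ (fun _ => pow_zero _),
    Finsupp.prod_fintype _ _ (fun _ => pow_zero _), Fin.prod_univ_castSucc, Fin.prod_univ_succ]
  simp only [Finsupp.mapDomain_equiv_apply, finRotate_symm_zero, finRotate_symm_succ,
    cycleSubst_last, cycleSubst_castSucc, mul_pow, algebraMap_eq, C_mul, C_pow]
  ring

lemma coeff_mapDomain_finRotate_aeval_cycleSubst (a : R) (m : Fin (n + 1) →₀ ℕ)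
    (p : MvPolynomial (Fin (n + 1)) R) :
    coeff (m.mapDomain (finRotate _)) (aeval (cycleSubst a) p) =
      a ^ m (Fin.last n) * coeff m p := by
  induction p using MvPolynomial.induction_on' with
  | monomial m' c =>
    classical
    rw [aeval_cycleSubst_monomial, coeff_monomial, coeff_monomial]
    by_cases h : m' = m
    · rw [if_pos (congrArg _ h), if_pos h, h]
    · rw [if_neg ((Finsupp.mapDomain_injective (finRotate _).injective).ne h), if_neg h, mul_zero]
  | add p q hp hq => rw [map_add, coeff_add, coeff_add, hp, hq, mul_add]

end Cycle

end MvPolynomial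

section Compositions

variable {m : ℕ}

def hat (κ : Fin (m + 1) → ℕ) : Fin (m + 1) → ℕ :=
  Fin.cons (κ (Fin.last m) + 1) (fun j => κ j.castSucc)

@[simp] lemma hat_zero (κ : Fin (m + 1) → ℕ) : hat κ 0 = κ (Fin.last m) + 1 := rfl

@[simp] lemma hat_succ (κ : Fin (m + 1) → ℕ) (j : Fin m) : hat κ j.succ = κ j.castSucc := rfl

lemma exists_hat_eq {ν : Fin (m + 1) → ℕ} (h : ν 0 ≠ 0) : ∃ κ, hat κ = ν := by
  refine ⟨Fin.snoc (fun j => ν j.succ) (ν 0 - 1), funext fun i => ?_⟩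
  cases i using Fin.cases with
  | zero => simp only [hat_zero, Fin.snoc_last]; omega
  | succ j => simp

lemma wt_hat (κ : Fin (m + 1) → ℕ) : wt (hat κ) = wt κ + 1 := by
  simp only [wt, Fin.sum_univ_succ (f := hat κ), Fin.sum_univ_castSucc (f := κ), hat_zero, hat_succ]
  ring

lemma wt_cons_zero (κ : Fin m → ℕ) : wt (Fin.cons 0 κ : Fin (m + 1) → ℕ) = wt κ := by
  simp [wt, Fin.sum_univ_succ]

@[simp] lemma toMono_apply {n : ℕ} (ν : Fin n → ℕ) (i : Fin n) : toMono ν i = ν i := rfl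

lemma degree_toMono {n : ℕ} (ν : Fin n → ℕ) : (toMono ν).degree = wt ν :=
  Finsupp.degree_eq_sum _

lemma toMono_cons_zero (κ : Fin m → ℕ) :
    toMono (Fin.cons 0 κ : Fin (m + 1) → ℕ) = (toMono κ).cons 0 := by
  ext i
  cases i using Fin.cases <;> rfl

lemma single_zero_add_mapDomain_finRotate_toMono (κ : Fin (m + 1) → ℕ) :
    Finsupp.single 0 1 + (toMono κ).mapDomain (finRotate _) = toMono (hat κ) := by
  ext i
  cases i using Fin.cases with
  | zero =>
    simp only [Finsupp.add_apply, Finsupp.mapDomain_equiv_apply, finRotate_symm_zero,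
      toMono_apply, hat_zero, Finsupp.single_eq_same]
    omega
  | succ j =>
    simp only [Finsupp.add_apply, Finsupp.mapDomain_equiv_apply, finRotate_symm_succ,
      toMono_apply, hat_succ, Finsupp.single_eq_of_ne (Fin.succ_ne_zero j), zero_add]

lemma coeff_toMono_hat_X_sub_C_mul_aeval_cycleSubst {R : Type*} [CommRing R]
    {κ : Fin (m + 1) → ℕ} {p : MvPolynomial (Fin (m + 1)) R} (hp : p.totalDegree ≤ wt κ)
    (a c : R) :
    coeff (toMono (hat κ)) ((X 0 - C c) * aeval (cycleSubst a) p) =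
      a ^ κ (Fin.last m) * coeff (toMono κ) p := by
  have hdeg :
      (aeval (cycleSubst a) p).totalDegree ≤ ((toMono κ).mapDomain (finRotate _)).degree := by
    rw [Finsupp.degree_mapDomain, degree_toMono]
    exact (totalDegree_aeval_le (totalDegree_cycleSubst_le a) p).trans hp
  rw [← single_zero_add_mapDomain_finRotate_toMono, coeff_single_add_X_sub_C_mul hdeg,
    coeff_mapDomain_finRotate_aeval_cycleSubst, toMono_apply]

end Compositions

lemma qK_ne_zero : qK ≠ 0 := RatFunc.X_ne_zero

lemma qK_pow_mul_tK_zpow_ne {a : ℕ} (ha : a ≠ 0) (z w : ℤ) : qK ^ a * tK ^ z ≠ tK ^ w := by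
  intro h
  have htK (z : ℤ) : tK ^ z = RatFunc.C (tk ^ z) := (map_zpow₀ RatFunc.C tk z).symm
  have hqK : qK ^ a = algebraMap _ _ (Polynomial.X ^ a : Polynomial kk) := by
    rw [map_pow, RatFunc.algebraMap_X]; rfl
  have hdeg := congrArg RatFunc.intDegree h
  rw [htK, htK, RatFunc.intDegree_mul (pow_ne_zero _ qK_ne_zero)
    ((map_ne_zero _).mpr (zpow_ne_zero _ RatFunc.X_ne_zero)), RatFunc.intDegree_C,
    RatFunc.intDegree_C, hqK, RatFunc.intDegree_polynomial, Polynomial.natDegree_X_pow] at hdeg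
  omega

section Points

variable {m : ℕ}

lemma kStat_hat_zero (κ : Fin (m + 1) → ℕ) : kStat (hat κ) 0 = kStat κ (Fin.last m) := by
  rw [kStat, kStat, Finset.card_filter, Finset.card_filter, Finset.card_filter, Finset.card_filter,
    Fin.sum_univ_succ, Fin.sum_univ_succ, Fin.sum_univ_castSucc, Fin.sum_univ_castSucc]
  simp [lt_asymm (Fin.castSucc_lt_last _)]

lemma kStat_hat_succ (κ : Fin (m + 1) → ℕ) (j : Fin m) :
    kStat (hat κ) j.succ = kStat κ j.castSucc := by
  rw [kStat, kStat, Finset.card_filter, Finset.card_filter, Finset.card_filter, Finset.card_filter,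
    Fin.sum_univ_succ, Fin.sum_univ_succ, Fin.sum_univ_castSucc, Fin.sum_univ_castSucc]
  simp [lt_asymm (Fin.castSucc_lt_last _), Fin.succ_pos]
  omega

lemma kStat_zero_of_zero {ν : Fin (m + 1) → ℕ} (h : ν 0 = 0) : kStat ν 0 = m := by
  rw [kStat, Finset.card_filter, Finset.card_filter, Fin.sum_univ_succ, Fin.sum_univ_succ]
  simp [h, Fin.succ_pos]

lemma kStat_cons_zero_succ (κ : Fin m → ℕ) (j : Fin m) :
    kStat (Fin.cons 0 κ : Fin (m + 1) → ℕ) j.succ = kStat κ j := by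
  rw [kStat, kStat, Finset.card_filter, Finset.card_filter, Finset.card_filter, Finset.card_filter,
    Fin.sum_univ_succ, Fin.sum_univ_succ]
  simp [Fin.succ_pos]

lemma mubar_hat_zero (κ : Fin (m + 1) → ℕ) : mubar (hat κ) 0 = qK * mubar κ (Fin.last m) := by
  rw [mubar, mubar, kStat_hat_zero, hat_zero, pow_succ]
  ring

lemma mubar_hat_succ (κ : Fin (m + 1) → ℕ) (j : Fin m) :
    mubar (hat κ) j.succ = mubar κ j.castSucc := by
  rw [mubar, mubar, kStat_hat_succ, hat_succ]

lemma mubar_zero_eq_iff (ν : Fin (m + 1) → ℕ) : mubar ν 0 = tK ^ (-(m : ℤ)) ↔ ν 0 = 0 := by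
  refine ⟨fun h => by_contra fun h0 => qK_pow_mul_tK_zpow_ne h0 _ _ h, fun h0 => ?_⟩
  rw [mubar, kStat_zero_of_zero h0, h0, pow_zero, one_mul]

lemma mubar_cons_zero (κ : Fin m → ℕ) :
    mubar (Fin.cons 0 κ : Fin (m + 1) → ℕ) = Fin.cons (tK ^ (-(m : ℤ))) (mubar κ) := by
  funext i
  cases i using Fin.cases with
  | zero => exact (mubar_zero_eq_iff _).mpr rfl
  | succ j => rw [Fin.cons_succ, mubar, mubar, kStat_cons_zero_succ, Fin.cons_succ]

lemma eval_mubar_hat_aeval_cycleSubst (κ : Fin (m + 1) → ℕ) (p : MvPolynomial (Fin (m + 1)) KK) :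
    eval (mubar (hat κ)) (aeval (cycleSubst qK⁻¹) p) = eval (mubar κ) p := by
  rw [eval_aeval]
  refine congrArg (fun v => eval v p) (funext fun i => ?_)
  cases i using Fin.lastCases with
  | last => simp [mubar_hat_zero, qK_ne_zero]
  | cast j => simp [mubar_hat_succ]

lemma eval_mubar_aeval_cycleSubstInv (κ : Fin (m + 1) → ℕ) (p : MvPolynomial (Fin (m + 1)) KK) :
    eval (mubar κ) (aeval (cycleSubstInv qK) p) = eval (mubar (hat κ)) p := by
  rw [eval_aeval]
  refine congrArg (fun v => eval v p) (funext fun i => ?_)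
  cases i using Fin.cases with
  | zero => simp [mubar_hat_zero]
  | succ j => simp [mubar_hat_succ]

end Points

structure IsIntNull {n : ℕ} (S : Set (Fin n → ℕ)) (d : ℕ) (f : MvPolynomial (Fin n) KK) :
    Prop where
  wt_eq : ∀ ν ∈ S, wt ν = d
  totalDegree_le : f.totalDegree ≤ d
  coeff_eq_zero : ∀ ν ∈ S, coeff (toMono ν) f = 0
  eval_eq_zero : ∀ ν ∉ S, wt ν ≤ d → eval (mubar ν) f = 0

namespace IsIntNull

variable {m d : ℕ} {S : Set (Fin (m + 1) → ℕ)}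

lemma substZero {f : MvPolynomial (Fin (m + 1)) KK} (hf : IsIntNull S d f) :
    IsIntNull {κ : Fin m → ℕ | (Fin.cons 0 κ : Fin (m + 1) → ℕ) ∈ S} d
      (substZero (tK ^ (-(m : ℤ))) f) where
  wt_eq κ hκ := wt_cons_zero κ ▸ hf.wt_eq _ hκ
  totalDegree_le := (totalDegree_substZero_le _ f).trans hf.totalDegree_le
  coeff_eq_zero κ hκ := by
    have hdeg : f.totalDegree ≤ (toMono κ).degree := by
      rw [degree_toMono, ← wt_cons_zero κ, hf.wt_eq _ hκ]
      exact hf.totalDegree_le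
    rw [coeff_substZero_of_totalDegree_le _ hdeg, ← toMono_cons_zero]
    exact hf.coeff_eq_zero _ hκ
  eval_eq_zero κ hκ hwt := by
    rw [eval_substZero, ← mubar_cons_zero]
    exact hf.eval_eq_zero _ hκ (by rwa [wt_cons_zero])

lemma aeval_cycleSubstInv {g : MvPolynomial (Fin (m + 1)) KK} (hg : g ≠ 0)
    (hf : IsIntNull S d ((X 0 - C (tK ^ (-(m : ℤ)))) * g)) :
    IsIntNull (hat ⁻¹' S) (d - 1) (aeval (cycleSubstInv qK) g) := by
  have hdeg := hf.totalDegree_le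
  rw [totalDegree_X_sub_C_mul _ _ hg] at hdeg
  have hdeg' : (aeval (cycleSubstInv qK) g).totalDegree ≤ d - 1 :=
    (totalDegree_aeval_le (totalDegree_cycleSubstInv_le _) g).trans (by omega)
  have hwt (κ : Fin (m + 1) → ℕ) (hκ : hat κ ∈ S) : wt κ = d - 1 := by
    have := hf.wt_eq _ hκ
    rw [wt_hat] at this
    omega
  refine ⟨hwt, hdeg', fun κ hκ => ?_, fun κ hκ hwtκ => ?_⟩
  · have h := hf.coeff_eq_zero _ hκ
    rw [← aeval_cycleSubst_aeval_cycleSubstInv (inv_mul_cancel₀ qK_ne_zero) g,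
      coeff_toMono_hat_X_sub_C_mul_aeval_cycleSubst ((hwt κ hκ).symm ▸ hdeg')] at h
    exact (mul_eq_zero.mp h).resolve_left (pow_ne_zero _ (inv_ne_zero qK_ne_zero))
  · have h := hf.eval_eq_zero _ hκ (by rw [wt_hat]; omega)
    rw [eval_mul, eval_sub, eval_X, eval_C] at h
    rw [eval_mubar_aeval_cycleSubstInv]
    -- `x₀ - t^{-m}` does not vanish at `κ̂̄`, since `κ̂₀ ≠ 0`
    refine (mul_eq_zero.mp h).resolve_left (sub_ne_zero.mpr fun h0 => ?_)
    exact absurd ((mubar_zero_eq_iff _).mp h0) (by simp)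

end IsIntNull

theorem IsIntNull.eq_zero {n d : ℕ} {S : Set (Fin n → ℕ)} {f : MvPolynomial (Fin n) KK}
    (hf : IsIntNull S d f) : f = 0 := by
  cases n with
  | zero =>
    suffices coeff 0 f = 0 by rw [eq_C_of_isEmpty f, this, map_zero]
    by_cases h : Fin.elim0 ∈ S
    · simpa [Subsingleton.elim (toMono Fin.elim0) 0] using hf.coeff_eq_zero _ h
    · have h0 := hf.eval_eq_zero _ h (by simp [wt])
      rwa [eq_C_of_isEmpty f, eval_C] at h0
  | succ m =>
    obtain ⟨g, rfl⟩ := X_zero_sub_C_dvd_of_substZero_eq_zero hf.substZero.eq_zero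
    rcases eq_or_ne g 0 with rfl | hg
    · exact mul_zero _
    have hd : 0 < d := by -- for termination
      have := hf.totalDegree_le
      rw [totalDegree_X_sub_C_mul _ _ hg] at this
      omega
    rw [← aeval_cycleSubst_aeval_cycleSubstInv (inv_mul_cancel₀ qK_ne_zero) g,
      (hf.aeval_cycleSubstInv hg).eq_zero, map_zero, mul_zero]
termination_by n + d

lemma IsIntE.unique {n : ℕ} {μ : Fin n → ℕ} {E E' : MvPolynomial (Fin n) KK} (hE : IsIntE μ E)
    (hE' : IsIntE μ E') : E = E' := by
  obtain ⟨hdeg, hcoeff, hvan⟩ := hE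
  obtain ⟨hdeg', hcoeff', hvan'⟩ := hE'
  refine sub_eq_zero.mp (IsIntNull.eq_zero (S := {μ}) ⟨fun ν hν => congrArg wt hν,
    (totalDegree_sub _ _).trans (max_le hdeg hdeg'), ?_, ?_⟩)
  · rintro ν rfl
    rw [coeff_sub, hcoeff, hcoeff', sub_self]
  · intro ν hν hwt
    rw [map_sub, hvan ν hν hwt, hvan' ν hν hwt, sub_self]

lemma isIntE_hat {n : ℕ} {μ : Fin (n + 1) → ℕ} {E : MvPolynomial (Fin (n + 1)) KK}
    (hE : IsIntE μ E) :
    IsIntE (hat μ) ((X 0 - C (tK ^ (-(n : ℤ)))) * C (qK ^ μ (Fin.last n)) *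
      aeval (cycleSubst qK⁻¹) E) := by
  obtain ⟨hdeg, hcoeff, hvan⟩ := hE
  set c : KK := tK ^ (-(n : ℤ))
  set P := aeval (cycleSubst qK⁻¹) E
  have hP : P.totalDegree ≤ wt μ :=
    (totalDegree_aeval_le (totalDegree_cycleSubst_le _) E).trans hdeg
  have hreorder : (X 0 - C c) * C (qK ^ μ (Fin.last n)) * P =
      C (qK ^ μ (Fin.last n)) * ((X 0 - C c) * P) := by ring
  rw [hreorder]
  refine ⟨?_, ?_, ?_⟩
  · refine (totalDegree_mul _ _).trans ?_
    rw [totalDegree_C, zero_add, wt_hat]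
    refine (totalDegree_mul _ _).trans ?_
    rw [totalDegree_X_sub_C]
    omega
  · rw [coeff_C_mul, coeff_toMono_hat_X_sub_C_mul_aeval_cycleSubst hdeg, hcoeff, mul_one,
      inv_pow, mul_inv_cancel₀ (pow_ne_zero _ qK_ne_zero)]
  · intro ν hν hwt
    rw [eval_mul, eval_C, eval_mul, eval_sub, eval_X, eval_C]
    by_cases h0 : ν 0 = 0
    · rw [(mubar_zero_eq_iff ν).mpr h0, sub_self, zero_mul, mul_zero]
    obtain ⟨κ, rfl⟩ := exists_hat_eq h0
    rw [eval_mubar_hat_aeval_cycleSubst, hvan κ (fun h => hν (congrArg hat h)) (by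
      simp only [wt_hat] at hwt; omega), mul_zero, mul_zero]

/-- Knop–Sahi recurrence. The number of variables is `n + 1`, and
`μ̂ = (μₙ₊₁ + 1, μ₁, …, μₙ)` (with 1-based indexing as in the paper, the last part
moved to the front and increased by 1). -/
theorem knop_sahi_recurrence (n : ℕ) (μ : Fin (n + 1) → ℕ)
    (E E' : MvPolynomial (Fin (n + 1)) KK)
    (hE : IsIntE μ E)
    (hE' : IsIntE (Fin.cons (μ (Fin.last n) + 1) (fun i : Fin n => μ i.castSucc)) E') :
    E' = (X 0 - C (tK ^ (-(n : ℤ)))) * C (qK ^ μ (Fin.last n))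
        * (aeval (fun i : Fin (n + 1) =>
            (Fin.lastCases (C qK⁻¹ * X 0) (fun j : Fin n => X j.succ) i
              : MvPolynomial (Fin (n + 1)) KK))) E :=
  hE'.unique (isIntE_hat hE)
end
end

section
/- Two-column t-interpolation Schur polynomial identity: Let a ≥ 1 and b ≥ 0 with a + b ≤ n, and let λ = (2^a, 1^b). Then s*_λ(t·x₁,…,t·xₙ;t) = t^a · e*_{a+b}(t·x₁,…,t·xₙ;t) · e*_a(x₁,…,xₙ;t) − t^{a+b+1} · e*_{a+b+1}(x₁,…,xₙ;t) · e*_{a−1}(t·x₁,…,t·xₙ;t), where f(t·x₁,…,t·xₙ) denotes the polynomial f with each variable xᵢ replaced by t·xᵢ, and e*_m := 0 for m > n. -/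
open MvPolynomial

noncomputable section

/-- A filling `T` of the Young diagram of `λ` (row `i` has cells `j : Fin (λ i)`) with
values in `{1,…,n}` (encoded as `Fin n`, with `T i j : Fin n` encoding the value
`(T i j : ℕ) + 1`) is a semistandard Young tableau: rows weakly increase and columns
strictly increase. -/
def IsSSYT {n : ℕ} (lam : Fin n → ℕ) (T : (i : Fin n) → Fin (lam i) → Fin n) : Prop :=
  (∀ (i : Fin n) (j j' : Fin (lam i)), j ≤ j' → T i j ≤ T i j') ∧
    (∀ (i i' : Fin n) (j : Fin (lam i)) (j' : Fin (lam i')),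
      i < i' → (j : ℕ) = (j' : ℕ) → T i j < T i' j')

/-- The `t`-interpolation Schur polynomial
`s*_λ(x₁,…,xₙ;t) = Σ_{T ∈ SSYT(λ;n)} ∏_{□ ∈ λ} (x_{T(□)} − t^{c(□) + T(□) − n})`,
where `c(□) = j − i` is the content of the cell `□ = (i, j)`. -/
def sstar (n : ℕ) (lam : Fin n → ℕ) : MvPolynomial (Fin n) kk :=
  letI := Classical.decPred (fun T : (i : Fin n) → Fin (lam i) → Fin n => IsSSYT lam T)
  ∑ T ∈ Finset.univ.filter (fun T : (i : Fin n) → Fin (lam i) → Fin n => IsSSYT lam T),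
    ∏ i : Fin n, ∏ j : Fin (lam i),
      (X (T i j) - C (tk ^ (((j : ℤ) - (i : ℤ)) + ((T i j : ℤ) + 1) - (n : ℤ))))

/-!
Reading a semistandard tableau of shape `(2^a, 1^b)` column by column identifies it with a pair
`(A, B)` of subsets of `{1, …, n}` with `#A = a + b`, `#B = a` such that `A` dominates `B`, i.e.
`#(B ∩ [1, v]) ≤ #(A ∩ [1, v])` for every `v`; its weight is then the product of the `A`-summand
of `e*_{a+b}` and the `B`-summand of `e*_a`, with parameters shifted by the column index.
Substituting `t·x` for `x` only rescales these summands and shifts their parameter by one.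

The product `e*_{a+b} e*_a` is the sum over all pairs. The pairs in which `A` does not
dominate `B` are matched bijectively with all pairs of sizes `(a + b + 1, a − 1)` by exchanging
the parts of `A` and `B` up to the first place `θ` where `B` overtakes `A`. At `θ` the two
counts differ by exactly one, so below `θ` the ranks of the exchanged elements are unchanged
while above `θ` they move by one, which is exactly absorbed by the opposite shifts of parameter
in the two factors: the matching preserves weights, leaving the dominating pairs as the
difference.
-/

namespace TwoColumn

open Finset

variable {n : ℕ}

def countLT (S : Finset (Fin n)) (v : Fin n) : ℕ := #{u ∈ S | u < v}

def countLE (S : Finset (Fin n)) (v : Fin n) : ℕ := #{u ∈ S | u ≤ v}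

lemma countLT_add_card_compl_filter (S : Finset (Fin n)) (v : Fin n) :
    countLT S v + #{j ∈ Sᶜ | j < v} = v := by
  rw [countLT, ← card_union_of_disjoint (disjoint_filter_filter disjoint_compl_right),
    ← filter_union, union_compl, filter_gt_eq_Iio, Fin.card_Iio]

lemma countLE_eq_countLT_add (S : Finset (Fin n)) (v : Fin n) :
    countLE S v = countLT S v + if v ∈ S then 1 else 0 := by
  have : {u ∈ S | u ≤ v} = {u ∈ S | u < v} ∪ {u ∈ S | u = v} := by
    ext u; simp only [mem_filter, mem_union]; grind
  rw [countLE, countLT, this, card_union_of_disjoint (disjoint_filter.2 fun _ _ h => h.ne),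
    filter_eq']
  split_ifs <;> simp

lemma countLE_le_countLT_of_lt (S : Finset (Fin n)) {w v : Fin n} (h : w < v) :
    countLE S w ≤ countLT S v :=
  card_le_card fun u hu => by simp only [mem_filter] at hu ⊢; exact ⟨hu.1, hu.2.trans_lt h⟩

lemma countLT_le_of_forall_lt {P Q : Finset (Fin n)} {θ : Fin n}
    (h : ∀ v < θ, countLE Q v ≤ countLE P v) : countLT Q θ ≤ countLT P θ := by
  rcases ({u ∈ Q | u < θ} : Finset (Fin n)).eq_empty_or_nonempty with hQ | hQ
  · simp [countLT, hQ]
  set w := ({u ∈ Q | u < θ} : Finset (Fin n)).max' hQ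
  have hw : w < θ := (mem_filter.1 (max'_mem _ hQ)).2
  have : countLT Q θ = countLE Q w := by
    refine congrArg card (subset_antisymm (fun u hu => ?_) fun u hu => ?_)
    · exact mem_filter.2 ⟨(mem_filter.1 hu).1, le_max' _ u hu⟩
    · simp only [mem_filter] at hu ⊢; exact ⟨hu.1, hu.2.trans_lt hw⟩
  rw [this]
  exact (h w hw).trans (countLE_le_countLT_of_lt P hw)

def rankProd (ℓ : ℤ) (r : Fin n → ℕ) (S : Finset (Fin n)) : MvPolynomial (Fin n) kk :=
  ∏ i ∈ S, (X i - C (tk ^ ((i : ℤ) - r i - ℓ)))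

/-- The summand of `estar` indexed by `S`, with `#{j ∈ Sᶜ | j < i}` written as
`i - countLT S i` (see `estar_eq_sum_estarTerm`). -/
def estarTerm (ℓ : ℤ) (S : Finset (Fin n)) : MvPolynomial (Fin n) kk :=
  rankProd ℓ (countLT S) S

lemma estar_eq_sum_estarTerm (m : ℕ) (ℓ : ℤ) :
    estar n m ℓ = ∑ S ∈ powersetCard m univ, estarTerm ℓ S := by
  refine sum_congr rfl fun S _ => prod_congr rfl fun i _ => ?_
  rw [← countLT_add_card_compl_filter S i]
  push_cast
  ring_nf

lemma rankProd_congr {ℓ ℓ' : ℤ} {r r' : Fin n → ℕ} {S : Finset (Fin n)}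
    (h : ∀ i ∈ S, (r i : ℤ) + ℓ = r' i + ℓ') : rankProd ℓ r S = rankProd ℓ' r' S :=
  prod_congr rfl fun i hi => by rw [sub_sub, sub_sub, h i hi]

lemma rankProd_filter_mul (ℓ : ℤ) (r : Fin n → ℕ) (S : Finset (Fin n)) (θ : Fin n) :
    rankProd ℓ r {u ∈ S | u ≤ θ} * rankProd ℓ r {u ∈ S | θ < u} = rankProd ℓ r S := by
  rw [rankProd, rankProd, rankProd, ← prod_filter_mul_prod_filter_not S (· ≤ θ)]
  simp_rw [not_le]

lemma aeval_rankProd (ℓ : ℤ) (r : Fin n → ℕ) (S : Finset (Fin n)) :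
    aeval (fun i : Fin n => (C tk * X i : MvPolynomial (Fin n) kk)) (rankProd ℓ r S)
      = C (tk ^ #S) * rankProd (ℓ + 1) r S := by
  have htk : tk ≠ 0 := RatFunc.X_ne_zero
  rw [rankProd, rankProd, map_prod, map_pow, ← prod_const, ← prod_mul_distrib]
  refine prod_congr rfl fun i _ => ?_
  rw [map_sub, aeval_X, aeval_C, algebraMap_eq, ← sub_add_cancel ((i : ℤ) - r i - ℓ) 1,
    zpow_add_one₀ htk, map_mul]
  ring_nf

lemma aeval_estarTerm (ℓ : ℤ) (S : Finset (Fin n)) :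
    aeval (fun i : Fin n => (C tk * X i : MvPolynomial (Fin n) kk)) (estarTerm ℓ S)
      = C (tk ^ #S) * estarTerm (ℓ + 1) S :=
  aeval_rankProd ℓ _ S

lemma aeval_estar (m : ℕ) (ℓ : ℤ) :
    aeval (fun i : Fin n => (C tk * X i : MvPolynomial (Fin n) kk)) (estar n m ℓ)
      = C (tk ^ m) * estar n m (ℓ + 1) := by
  simp only [estar_eq_sum_estarTerm, map_sum, mul_sum]
  refine sum_congr rfl fun S hS => ?_
  rw [aeval_estarTerm, mem_powersetCard_univ.1 hS]

def swapAt (P Q : Finset (Fin n)) (θ : Fin n) : Finset (Fin n) :=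
  {u ∈ Q | u ≤ θ} ∪ {u ∈ P | θ < u}

section swapAt

variable {P Q : Finset (Fin n)} {θ v : Fin n}

lemma mem_swapAt {u : Fin n} : u ∈ swapAt P Q θ ↔ if u ≤ θ then u ∈ Q else u ∈ P := by
  simp only [swapAt, mem_union, mem_filter]
  grind

lemma swapAt_swapAt_swapAt : swapAt (swapAt Q P θ) (swapAt P Q θ) θ = Q := by
  ext u; simp only [mem_swapAt]; split_ifs <;> rfl

lemma filter_swapAt_of_le {p : Fin n → Prop} [DecidablePred p] (hp : ∀ u, p u → u ≤ θ) :
    {u ∈ swapAt P Q θ | p u} = {u ∈ Q | p u} := by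
  ext u; simp only [mem_filter, mem_swapAt]; grind

lemma filter_swapAt_of_gt {p : Fin n → Prop} [DecidablePred p] (hp : ∀ u, p u → θ < u) :
    {u ∈ swapAt P Q θ | p u} = {u ∈ P | p u} := by
  ext u; simp only [mem_filter, mem_swapAt]; grind

lemma countLE_swapAt_of_le (hv : v ≤ θ) : countLE (swapAt P Q θ) v = countLE Q v := by
  rw [countLE, countLE, filter_swapAt_of_le fun u hu => le_trans hu hv]

lemma countLT_swapAt_of_le (hv : v ≤ θ) : countLT (swapAt P Q θ) v = countLT Q v := by
  rw [countLT, countLT, filter_swapAt_of_le fun u hu => (lt_of_lt_of_le hu hv).le]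

lemma countLT_eq_countLE_add (S : Finset (Fin n)) (hv : θ < v) :
    countLT S v = countLE S θ + #{u ∈ S | θ < u ∧ u < v} := by
  rw [countLT, countLE, ← card_union_of_disjoint (disjoint_filter.2 fun _ _ h h' => h'.1.not_ge h)]
  congr 1; ext u; simp only [mem_filter, mem_union]; grind

lemma card_eq_countLE_add (S : Finset (Fin n)) (θ : Fin n) :
    #S = countLE S θ + #{u ∈ S | θ < u} := by
  rw [countLE, ← card_union_of_disjoint (disjoint_filter.2 fun _ _ h h' => h'.not_ge h)]
  congr 1; ext u; simp only [mem_filter, mem_union]; grind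

lemma countLT_swapAt_of_lt (hv : θ < v) :
    countLT (swapAt P Q θ) v + countLE P θ = countLT P v + countLE Q θ := by
  rw [countLT_eq_countLE_add _ hv, countLT_eq_countLE_add _ hv, countLE_swapAt_of_le le_rfl,
    filter_swapAt_of_gt fun _ h => h.1]
  ring

lemma card_swapAt : #(swapAt P Q θ) + countLE P θ = #P + countLE Q θ := by
  rw [card_eq_countLE_add _ θ, card_eq_countLE_add P θ, countLE_swapAt_of_le le_rfl,
    filter_swapAt_of_gt fun _ h => h]
  ring

end swapAt

lemma estarTerm_swapAt (ℓ : ℤ) (P Q : Finset (Fin n)) (θ : Fin n) :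
    estarTerm ℓ (swapAt P Q θ) = rankProd ℓ (countLT Q) {u ∈ Q | u ≤ θ}
      * rankProd (ℓ + countLE Q θ - countLE P θ) (countLT P) {u ∈ P | θ < u} := by
  rw [estarTerm, ← rankProd_filter_mul _ _ _ θ, filter_swapAt_of_le fun _ h => h,
    filter_swapAt_of_gt fun _ h => h]
  congr 1 <;> refine rankProd_congr fun i hi => ?_
  · rw [countLT_swapAt_of_le (mem_filter.1 hi).2]
  · have := countLT_swapAt_of_lt (P := P) (Q := Q) (mem_filter.1 hi).2
    omega

lemma estarTerm_mul_estarTerm_swapAt {P Q : Finset (Fin n)} {θ : Fin n} (ℓ : ℤ)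
    (h : countLE Q θ = countLE P θ + 1) :
    estarTerm ℓ P * estarTerm (ℓ - 1) Q
      = estarTerm (ℓ - 1) (swapAt P Q θ) * estarTerm ℓ (swapAt Q P θ) := by
  rw [estarTerm_swapAt, estarTerm_swapAt, h, estarTerm, estarTerm,
    ← rankProd_filter_mul _ _ P θ, ← rankProd_filter_mul _ _ Q θ]
  push_cast
  ring_nf

/-- `A` and `B` are the first and second column of a semistandard tableau exactly when `A`
dominates `B` (see `dominates_image_iff`). -/
def Dominates (A B : Finset (Fin n)) : Prop := ∀ v, countLE B v ≤ countLE A v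

instance (A B : Finset (Fin n)) : Decidable (Dominates A B) :=
  by unfold Dominates; infer_instance

lemma not_dominates_of_card_lt {A B : Finset (Fin n)} (h : #A < #B) : ¬ Dominates A B := by
  have hne : B.Nonempty := card_pos.1 (Nat.zero_lt_of_lt h)
  have hB : countLE B (B.max' hne) = #B :=
    congrArg card (filter_true_of_mem fun u hu => le_max' B u hu)
  exact fun hd => ((hd _).trans (card_filter_le A _)).not_gt (hB ▸ h)

def IsFirstExcess (P Q : Finset (Fin n)) (θ : Fin n) : Prop :=
  countLE P θ < countLE Q θ ∧ ∀ v < θ, countLE Q v ≤ countLE P v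

lemma exists_isFirstExcess {P Q : Finset (Fin n)} (h : ¬ Dominates P Q) :
    ∃ θ, IsFirstExcess P Q θ := by
  simp only [Dominates, not_forall, not_le] at h
  obtain ⟨θ, hθ, hmin⟩ := wellFounded_lt.has_min {v | countLE P v < countLE Q v} h
  exact ⟨θ, hθ, fun v hv => not_lt.1 fun hlt => hmin v hlt hv⟩

namespace IsFirstExcess

variable {P Q : Finset (Fin n)} {θ : Fin n}

lemma countLE_eq_succ (h : IsFirstExcess P Q θ) : countLE Q θ = countLE P θ + 1 := by
  have hlt := countLT_le_of_forall_lt h.2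
  have hP := countLE_eq_countLT_add P θ
  have hQ := countLE_eq_countLT_add Q θ
  have := h.1
  split_ifs at hP hQ <;> omega

lemma unique {θ' : Fin n} (h : IsFirstExcess P Q θ) (h' : IsFirstExcess P Q θ') : θ = θ' :=
  le_antisymm (not_lt.1 fun hlt => (h.2 θ' hlt).not_gt h'.1)
    (not_lt.1 fun hlt => (h'.2 θ hlt).not_gt h.1)

lemma card_swapAt_eq (h : IsFirstExcess P Q θ) :
    #(swapAt P Q θ) = #P + 1 ∧ #(swapAt Q P θ) + 1 = #Q := by
  have hP := card_swapAt (P := P) (Q := Q) (θ := θ)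
  have hQ := card_swapAt (P := Q) (Q := P) (θ := θ)
  have := h.countLE_eq_succ
  omega

lemma swapAt (h : IsFirstExcess P Q θ) : IsFirstExcess (swapAt Q P θ) (swapAt P Q θ) θ := by
  refine ⟨?_, fun v hv => ?_⟩
  · rw [countLE_swapAt_of_le le_rfl, countLE_swapAt_of_le le_rfl]
    exact h.1
  · rw [countLE_swapAt_of_le hv.le, countLE_swapAt_of_le hv.le]
    exact h.2 v hv

end IsFirstExcess

open Classical in
def swapPair (AB : Finset (Fin n) × Finset (Fin n)) : Finset (Fin n) × Finset (Fin n) :=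
  if h : ∃ θ, IsFirstExcess AB.1 AB.2 θ then
    (swapAt AB.1 AB.2 h.choose, swapAt AB.2 AB.1 h.choose)
  else AB

lemma swapPair_eq {P Q : Finset (Fin n)} {θ : Fin n} (h : IsFirstExcess P Q θ) :
    swapPair (P, Q) = (swapAt P Q θ, swapAt Q P θ) := by
  have hex : ∃ θ, IsFirstExcess P Q θ := ⟨θ, h⟩
  rw [swapPair, dif_pos hex, hex.choose_spec.unique h]

lemma swapPair_swapPair {P Q : Finset (Fin n)} {θ : Fin n} (h : IsFirstExcess P Q θ) :
    (swapPair (swapPair (P, Q)).swap).swap = (P, Q) := by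
  rw [swapPair_eq h, Prod.swap_prod_mk (a := swapAt P Q θ), swapPair_eq h.swapAt,
    swapAt_swapAt_swapAt, swapAt_swapAt_swapAt, Prod.swap_prod_mk (a := Q)]

def pairs (n p q : ℕ) : Finset (Finset (Fin n) × Finset (Fin n)) :=
  powersetCard p univ ×ˢ powersetCard q univ

lemma mem_pairs {p q : ℕ} {AB : Finset (Fin n) × Finset (Fin n)} :
    AB ∈ pairs n p q ↔ #AB.1 = p ∧ #AB.2 = q := by
  simp [pairs]

lemma sum_pairs_estarTerm (p q : ℕ) (ℓ ℓ' : ℤ) :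
    ∑ AB ∈ pairs n p q, estarTerm ℓ AB.1 * estarTerm ℓ' AB.2 = estar n p ℓ * estar n q ℓ' := by
  simp only [pairs, sum_product, estar_eq_sum_estarTerm, sum_mul_sum]

lemma sum_filter_not_dominates {p q : ℕ} (hq : 0 < q) (hqp : q ≤ p + 1) (ℓ : ℤ) :
    ∑ AB ∈ (pairs n p q).filter (fun AB => ¬ Dominates AB.1 AB.2),
        estarTerm ℓ AB.1 * estarTerm (ℓ - 1) AB.2
      = ∑ AB ∈ pairs n (p + 1) (q - 1), estarTerm (ℓ - 1) AB.1 * estarTerm ℓ AB.2 := by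
  refine sum_nbij' swapPair (fun AB => (swapPair AB.swap).swap) ?_ ?_ ?_ ?_ ?_
  all_goals rintro ⟨P, Q⟩ hPQ
  all_goals simp only [mem_filter, mem_pairs] at hPQ
  · obtain ⟨θ, hθ⟩ := exists_isFirstExcess hPQ.2
    have := hθ.card_swapAt_eq
    simp only [swapPair_eq hθ, mem_pairs]
    omega
  · obtain ⟨θ, hθ⟩ := exists_isFirstExcess (not_dominates_of_card_lt (A := Q) (B := P) (by omega))
    have := hθ.card_swapAt_eq
    simp only [Prod.swap_prod_mk, swapPair_eq hθ, mem_filter, mem_pairs]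
    refine ⟨⟨by omega, by omega⟩, fun hd => ?_⟩
    exact (hd θ).not_gt hθ.swapAt.1
  · obtain ⟨θ, hθ⟩ := exists_isFirstExcess hPQ.2
    exact swapPair_swapPair hθ
  · obtain ⟨θ, hθ⟩ := exists_isFirstExcess (not_dominates_of_card_lt (A := Q) (B := P) (by omega))
    exact congrArg Prod.swap (swapPair_swapPair hθ)
  · obtain ⟨θ, hθ⟩ := exists_isFirstExcess hPQ.2
    rw [swapPair_eq hθ]
    exact estarTerm_mul_estarTerm_swapAt ℓ hθ.countLE_eq_succ

lemma sum_filter_dominates {p q : ℕ} (hq : 0 < q) (hqp : q ≤ p + 1) (ℓ : ℤ) :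
    ∑ AB ∈ (pairs n p q).filter (fun AB => Dominates AB.1 AB.2),
        estarTerm ℓ AB.1 * estarTerm (ℓ - 1) AB.2
      = estar n p ℓ * estar n q (ℓ - 1) - estar n (p + 1) (ℓ - 1) * estar n (q - 1) ℓ := by
  rw [← sum_pairs_estarTerm, ← sum_pairs_estarTerm, ← sum_filter_not_dominates hq hqp,
    eq_sub_iff_add_eq, sum_filter_add_sum_filter_not]

lemma prod_dite_val_lt {M : Type*} [CommMonoid M] {m : ℕ} (hm : m ≤ n)
    (f : (i : Fin n) → (i : ℕ) < m → M) :
    ∏ i : Fin n, (if h : (i : ℕ) < m then f i h else 1) = ∏ i : Fin m, f (Fin.castLE hm i) i.2 := by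
  rw [← prod_subset (subset_univ (univ.map (Fin.castLEEmb hm))) fun i _ hi =>
    dif_neg fun h => hi (mem_map.2 ⟨⟨i, h⟩, mem_univ _, rfl⟩), prod_map]
  exact prod_congr rfl fun i _ => dif_pos i.2

lemma prod_fin_of_le_two {M : Type*} [CommMonoid M] {m : ℕ} (hm : m ≤ 2) (g : Fin m → M) :
    ∏ j, g j = (if h : 0 < m then g ⟨0, h⟩ else 1) * (if h : 1 < m then g ⟨1, h⟩ else 1) := by
  interval_cases m <;> simp [Fin.prod_univ_two]

lemma countLE_image {m : ℕ} {c : Fin m → Fin n} (hc : Function.Injective c) (v : Fin n) :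
    countLE (image c univ) v = #{j | c j ≤ v} := by
  rw [countLE, filter_image, card_image_of_injective _ hc]

lemma countLT_image_apply {m : ℕ} {c : Fin m → Fin n} (hc : StrictMono c) (i : Fin m) :
    countLT (image c univ) (c i) = i := by
  rw [countLT, filter_image, card_image_of_injective _ hc.injective]
  simp only [hc.lt_iff_lt, filter_gt_eq_Iio, Fin.card_Iio]

lemma estarTerm_image {m : ℕ} {c : Fin m → Fin n} (hc : StrictMono c) (ℓ : ℤ) :
    estarTerm ℓ (image c univ) = ∏ i : Fin m, (X (c i) - C (tk ^ ((c i : ℤ) - i - ℓ))) := by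
  rw [estarTerm, rankProd, prod_image fun i _ j _ h => hc.injective h]
  simp only [countLT_image_apply hc]

lemma dominates_image_iff {p q : ℕ} (hqp : q ≤ p) {c : Fin p → Fin n} {d : Fin q → Fin n}
    (hc : StrictMono c) (hd : StrictMono d) :
    Dominates (image c univ) (image d univ) ↔ ∀ i, c (Fin.castLE hqp i) ≤ d i := by
  simp only [Dominates, countLE_image hc.injective, countLE_image hd.injective]
  constructor
  · intro h i
    have hd_le : (i : ℕ) < #{j | d j ≤ d i} :=
      (Fin.lt_card_filter_univ_iff_apply_of_imp _ fun _ _ hkj hk => (hd.monotone hkj).trans hk).2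
        le_rfl
    exact (Fin.lt_card_filter_univ_iff_apply_of_imp _ fun _ _ hkj hk =>
      (hc.monotone hkj).trans hk).1 (hd_le.trans_le (h (d i)))
  · refine fun h v => card_le_card_of_injOn (Fin.castLE hqp) (fun i hi => ?_)
      (Fin.castLE_injective hqp).injOn
    simp only [coe_filter, mem_univ, true_and, Set.mem_ofPred_eq] at hi ⊢
    exact (h i).trans hi

def twoColumnShape (a b : ℕ) : Fin n → ℕ :=
  fun i => if (i : ℕ) < a then 2 else if (i : ℕ) < a + b then 1 else 0

abbrev TwoColumnFilling (n a b : ℕ) : Type := (i : Fin n) → Fin (twoColumnShape a b i) → Fin n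

section TwoColumnFilling

variable {a b : ℕ}

lemma zero_lt_twoColumnShape_iff {i : Fin n} : 0 < twoColumnShape a b i ↔ (i : ℕ) < a + b := by
  unfold twoColumnShape; split_ifs <;> omega

lemma one_lt_twoColumnShape_iff {i : Fin n} : 1 < twoColumnShape a b i ↔ (i : ℕ) < a := by
  unfold twoColumnShape; split_ifs <;> omega

lemma twoColumnShape_le_two (i : Fin n) : twoColumnShape a b i ≤ 2 := by
  unfold twoColumnShape; split_ifs <;> omega

lemma prod_twoColumnShape {M : Type*} [CommMonoid M] (hab : a + b ≤ n)
    (g : (i : Fin n) → Fin (twoColumnShape a b i) → M) :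
    ∏ i, ∏ j, g i j
      = (∏ i : Fin (a + b), g (Fin.castLE hab i) ⟨0, zero_lt_twoColumnShape_iff.2 i.2⟩)
        * ∏ i : Fin a, g (Fin.castLE (le_of_add_le_left hab) i)
            ⟨1, one_lt_twoColumnShape_iff.2 i.2⟩ := by
  rw [← prod_dite_val_lt hab fun i h => g i ⟨0, zero_lt_twoColumnShape_iff.2 h⟩,
    ← prod_dite_val_lt (le_of_add_le_left hab) fun i h => g i ⟨1, one_lt_twoColumnShape_iff.2 h⟩,
    ← prod_mul_distrib]
  refine prod_congr rfl fun i _ => ?_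
  rw [prod_fin_of_le_two (twoColumnShape_le_two i)]
  simp only [zero_lt_twoColumnShape_iff, one_lt_twoColumnShape_iff]

def firstColumn (hab : a + b ≤ n) (T : TwoColumnFilling n a b) : Fin (a + b) → Fin n :=
  fun i => T (Fin.castLE hab i) ⟨0, zero_lt_twoColumnShape_iff.2 i.2⟩

def secondColumn (hab : a + b ≤ n) (T : TwoColumnFilling n a b) : Fin a → Fin n :=
  fun i => T (Fin.castLE (le_of_add_le_left hab) i) ⟨1, one_lt_twoColumnShape_iff.2 i.2⟩

def ofColumns (c₁ : Fin (a + b) → Fin n) (c₂ : Fin a → Fin n) : TwoColumnFilling n a b :=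
  fun i j => if hj : (j : ℕ) = 0 then c₁ ⟨i, zero_lt_twoColumnShape_iff.1 (hj ▸ j.2)⟩
    else c₂ ⟨i, one_lt_twoColumnShape_iff.1 (lt_of_le_of_lt (Nat.one_le_iff_ne_zero.2 hj) j.2)⟩

lemma firstColumn_ofColumns (hab : a + b ≤ n) (c₁ : Fin (a + b) → Fin n) (c₂ : Fin a → Fin n) :
    firstColumn hab (ofColumns c₁ c₂) = c₁ := rfl

lemma secondColumn_ofColumns (hab : a + b ≤ n) (c₁ : Fin (a + b) → Fin n)
    (c₂ : Fin a → Fin n) : secondColumn hab (ofColumns c₁ c₂) = c₂ := rfl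

lemma ofColumns_firstColumn_secondColumn (hab : a + b ≤ n) (T : TwoColumnFilling n a b) :
    ofColumns (firstColumn hab T) (secondColumn hab T) = T := by
  funext i j
  obtain ⟨_ | _ | j, hj⟩ := j
  · rfl
  · rfl
  · have := twoColumnShape_le_two (a := a) (b := b) i
    omega

lemma isSSYT_ofColumns_iff (hab : a + b ≤ n) {c₁ : Fin (a + b) → Fin n} {c₂ : Fin a → Fin n} :
    IsSSYT (twoColumnShape a b) (ofColumns c₁ c₂) ↔
      StrictMono c₁ ∧ StrictMono c₂ ∧ ∀ i, c₁ (Fin.castLE (Nat.le_add_right a b) i) ≤ c₂ i := by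
  have hshape := twoColumnShape_le_two (n := n) (a := a) (b := b)
  constructor
  · rintro ⟨hrow, hcol⟩
    have ha : a ≤ n := le_of_add_le_left hab
    refine ⟨fun i i' h => hcol (Fin.castLE hab i) (Fin.castLE hab i')
        ⟨0, zero_lt_twoColumnShape_iff.2 i.2⟩ ⟨0, zero_lt_twoColumnShape_iff.2 i'.2⟩ h rfl,
      fun i i' h => hcol (Fin.castLE ha i) (Fin.castLE ha i')
        ⟨1, one_lt_twoColumnShape_iff.2 i.2⟩ ⟨1, one_lt_twoColumnShape_iff.2 i'.2⟩ h rfl,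
      fun i => hrow (Fin.castLE ha i) ⟨0, zero_lt_twoColumnShape_iff.2 (Nat.lt_add_right b i.2)⟩
        ⟨1, one_lt_twoColumnShape_iff.2 i.2⟩ (Fin.mk_le_mk.2 zero_le_one)⟩
  · rintro ⟨h₁, h₂, hrow⟩
    refine ⟨fun i ⟨j, hj⟩ ⟨j', hj'⟩ hjj' => ?_, fun i i' ⟨j, hj⟩ ⟨j', hj'⟩ hii' hjj' => ?_⟩
    · rcases eq_or_lt_of_le hjj' with h | h
      · rw [h]
      · have := hshape i
        obtain ⟨rfl, rfl⟩ : j = 0 ∧ j' = 1 := by simp only [Fin.mk_lt_mk] at h; omega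
        exact hrow ⟨i, one_lt_twoColumnShape_iff.1 hj'⟩
    · obtain rfl : j = j' := hjj'
      have := hshape i
      obtain rfl | rfl : j = 0 ∨ j = 1 := by omega
      · exact h₁ hii'
      · exact h₂ hii'

lemma isSSYT_iff_columns (hab : a + b ≤ n) (T : TwoColumnFilling n a b) :
    IsSSYT (twoColumnShape a b) T ↔ StrictMono (firstColumn hab T) ∧
      StrictMono (secondColumn hab T) ∧
      ∀ i, firstColumn hab T (Fin.castLE (Nat.le_add_right a b) i) ≤ secondColumn hab T i := by
  conv_lhs => rw [← ofColumns_firstColumn_secondColumn hab T]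
  exact isSSYT_ofColumns_iff hab

/-- With 0-based indices as in `sstar`, the entry `T(□)` in row `r` of column `j` has rank `r` in
its column, so its exponent `(j - r) + (T(□) + 1) - n` is `T(□) - r - (n - 1 - j)`: the exponent
in `estarTerm (n - 1 - j)`. -/
lemma prod_cells_eq_estarTerm_mul (hab : a + b ≤ n) {T : TwoColumnFilling n a b}
    (hT : IsSSYT (twoColumnShape a b) T) :
    ∏ i : Fin n, ∏ j : Fin (twoColumnShape a b i),
        (X (T i j) - C (tk ^ (((j : ℤ) - (i : ℤ)) + ((T i j : ℤ) + 1) - (n : ℤ))))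
      = estarTerm ((n : ℤ) - 1) (image (firstColumn hab T) univ)
        * estarTerm ((n : ℤ) - 1 - 1) (image (secondColumn hab T) univ) := by
  obtain ⟨h₁, h₂, -⟩ := (isSSYT_iff_columns hab T).1 hT
  rw [prod_twoColumnShape hab, estarTerm_image h₁, estarTerm_image h₂]
  congr 1 <;> refine prod_congr rfl fun i _ => ?_ <;>
    simp only [firstColumn, secondColumn, Fin.val_castLE] <;> ring_nf

end TwoColumnFilling

lemma _root_.StrictMono.image_univ_inj {α : Type*} [LinearOrder α] {k : ℕ} {c d : Fin k → α}
    (hc : StrictMono c) (hd : StrictMono d) : image c univ = image d univ ↔ c = d := by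
  rw [← hc.range_inj hd, ← Set.image_univ, ← Set.image_univ, ← coe_univ, ← coe_image,
    ← coe_image, coe_inj]

lemma sstar_twoColumnShape {a b : ℕ} (hab : a + b ≤ n) :
    sstar n (twoColumnShape a b)
      = ∑ AB ∈ (pairs n (a + b) a).filter (fun AB => Dominates AB.1 AB.2),
          estarTerm ((n : ℤ) - 1) AB.1 * estarTerm ((n : ℤ) - 1 - 1) AB.2 := by
  classical
  rw [sstar]
  refine sum_nbij (fun T => (image (firstColumn hab T) univ, image (secondColumn hab T) univ))
    (fun T hT => ?_) (fun T hT T' hT' hTT' => ?_) (fun AB hAB => ?_)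
    fun T hT => prod_cells_eq_estarTerm_mul hab (mem_filter.1 hT).2
  · obtain ⟨h₁, h₂, hrow⟩ := (isSSYT_iff_columns hab T).1 (mem_filter.1 hT).2
    simp only [mem_filter, mem_pairs, card_image_of_injective _ h₁.injective,
      card_image_of_injective _ h₂.injective, card_univ, Fintype.card_fin, true_and]
    exact (dominates_image_iff _ h₁ h₂).2 hrow
  · obtain ⟨h₁, h₂, -⟩ := (isSSYT_iff_columns hab T).1 (mem_filter.1 hT).2
    obtain ⟨h₁', h₂', -⟩ := (isSSYT_iff_columns hab T').1 (mem_filter.1 hT').2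
    simp only [Prod.mk.injEq, h₁.image_univ_inj h₁', h₂.image_univ_inj h₂'] at hTT'
    rw [← ofColumns_firstColumn_secondColumn hab T, ← ofColumns_firstColumn_secondColumn hab T',
      hTT'.1, hTT'.2]
  · obtain ⟨A, B⟩ := AB
    simp only [coe_filter, mem_pairs, Set.mem_ofPred_eq] at hAB
    obtain ⟨⟨hA, hB⟩, hdom⟩ := hAB
    have hc₁ := (A.orderEmbOfFin hA).strictMono
    have hc₂ := (B.orderEmbOfFin hB).strictMono
    refine ⟨ofColumns (A.orderEmbOfFin hA) (B.orderEmbOfFin hB), ?_, ?_⟩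
    · rw [coe_filter, Set.mem_ofPred_eq, isSSYT_ofColumns_iff hab, ← dominates_image_iff _ hc₁ hc₂,
        image_orderEmbOfFin_univ, image_orderEmbOfFin_univ]
      exact ⟨mem_univ _, hc₁, hc₂, hdom⟩
    · simp only [firstColumn_ofColumns, secondColumn_ofColumns, image_orderEmbOfFin_univ]

lemma aeval_sstar_twoColumnShape {a b : ℕ} (hab : a + b ≤ n) :
    aeval (fun i : Fin n => (C tk * X i : MvPolynomial (Fin n) kk)) (sstar n (twoColumnShape a b))
      = C (tk ^ (a + b + a)) * ∑ AB ∈ (pairs n (a + b) a).filter (fun AB => Dominates AB.1 AB.2),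
          estarTerm (n : ℤ) AB.1 * estarTerm ((n : ℤ) - 1) AB.2 := by
  rw [sstar_twoColumnShape hab, map_sum, mul_sum]
  refine sum_congr rfl fun AB hAB => ?_
  obtain ⟨⟨hA, hB⟩, -⟩ := (mem_filter.1 hAB).imp_left mem_pairs.1
  rw [map_mul, aeval_estarTerm, aeval_estarTerm, hA, hB, sub_add_cancel, sub_add_cancel]
  simp only [map_pow]
  ring

end TwoColumn

/-- Two-column `t`-interpolation Schur polynomial identity for
`λ = (2^a, 1^b)`:
`s*_λ(t·x;t) = t^a e*_{a+b}(t·x;t) e*_a(x;t) − t^{a+b+1} e*_{a+b+1}(x;t) e*_{a−1}(t·x;t)`. -/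
theorem two_column_schur (n : ℕ) (a b : ℕ) (ha : 1 ≤ a) (hab : a + b ≤ n) :
    (aeval (fun i : Fin n => (C tk * X i : MvPolynomial (Fin n) kk)))
        (sstar n (fun i : Fin n => if (i : ℕ) < a then 2 else if (i : ℕ) < a + b then 1 else 0))
      = C (tk ^ a)
          * (aeval (fun i : Fin n => (C tk * X i : MvPolynomial (Fin n) kk)))
              (estar n (a + b) ((n : ℤ) - 1))
          * estar n a ((n : ℤ) - 1)
        - C (tk ^ (a + b + 1)) * estar n (a + b + 1) ((n : ℤ) - 1)
          * (aeval (fun i : Fin n => (C tk * X i : MvPolynomial (Fin n) kk)))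
              (estar n (a - 1) ((n : ℤ) - 1)) := by
  change aeval _ (sstar n (TwoColumn.twoColumnShape a b)) = _
  rw [TwoColumn.aeval_sstar_twoColumnShape hab, TwoColumn.sum_filter_dominates ha (by omega),
    TwoColumn.aeval_estar, TwoColumn.aeval_estar, sub_add_cancel]
  obtain ⟨k, rfl⟩ : ∃ k, a = k + 1 := ⟨a - 1, by omega⟩
  simp only [Nat.add_sub_cancel, map_pow]
  ring
end
end

section
/- Variable-splitting recurrence for interpolation elementary polynomials: For every 1 ≤ d ≤ n, e*_d(x₁,…,xₙ;t) = (x₁ − 1/t^{n−1}) · t^{−(d−1)} · ẽ*_{d−1}(t·x₂, …, t·xₙ; t) + ẽ*_d(x₂,…,xₙ;t), where e*_d denotes the n-variable interpolation elementary polynomial and ẽ*_m denotes the (n−1)-variable interpolation elementary polynomial in the variables x₂,…,xₙ (defined with t^{n−2} in place of t^{n−1}), with the convention ẽ*_n = 0. -/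
open MvPolynomial

noncomputable section

/-!
Split the `d`-subsets `S ⊆ {0, …, n}` according to whether `0 ∈ S`. If `0 ∉ S`, then
`S = T + 1` and each `i + 1 ∈ S` has one more non-element below it than `i` has in `T` (namely
`0`), which absorbs the change of exponent from `n - 1` to `n`. If `0 ∈ S`, the factor at `0`
is `x₀ - t^{-n}` and the counts at the other elements are unchanged; substituting `x ↦ t x` turns
each remaining factor `x - t^{c - (n - 1)}` into `t (x - t^{c - n})`, and the resulting
`t^{d - 1}` cancels against `t^{-(d - 1)}`.
-/

open Finset

namespace Finset

theorem sum_powersetCard_succ_insert {α β : Type*} [DecidableEq α] [AddCommMonoid β] {a : α}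
    {s : Finset α} (ha : a ∉ s) (k : ℕ) (f : Finset α → β) :
    ∑ t ∈ powersetCard (k + 1) (insert a s), f t
      = ∑ t ∈ powersetCard (k + 1) s, f t + ∑ t ∈ powersetCard k s, f (insert a t) := by
  have hdisj : Disjoint (powersetCard (k + 1) s) ((powersetCard k s).image (insert a)) := by
    refine disjoint_right.mpr fun u hu hu' => ?_
    obtain ⟨t, -, rfl⟩ := mem_image.mp hu
    exact ha ((mem_powersetCard.mp hu').1 (mem_insert_self a t))
  have hinj : Set.InjOn (insert a) (powersetCard k s : Set (Finset α)) := fun t ht t' ht' h => by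
    have hat : a ∉ t := fun h => ha ((mem_powersetCard.mp ht).1 h)
    have hat' : a ∉ t' := fun h => ha ((mem_powersetCard.mp ht').1 h)
    rw [← erase_insert hat, ← erase_insert hat', h]
  rw [powersetCard_succ_insert ha, sum_union hdisj, sum_image hinj]

end Finset

namespace Fin

theorem sum_powersetCard_univ_succ {β : Type*} [AddCommMonoid β] {n : ℕ} (k : ℕ)
    (f : Finset (Fin (n + 1)) → β) :
    ∑ S ∈ powersetCard (k + 1) univ, f S
      = ∑ T ∈ powersetCard (k + 1) (univ : Finset (Fin n)), f (T.map (succEmb n))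
        + ∑ T ∈ powersetCard k (univ : Finset (Fin n)), f (insert 0 (T.map (succEmb n))) := by
  have huniv : (univ : Finset (Fin (n + 1))) = insert 0 (univ.map (succEmb n)) := by
    rw [univ_succ, cons_eq_insert]; rfl
  rw [huniv, sum_powersetCard_succ_insert (by simp [succ_ne_zero]), powersetCard_map,
    powersetCard_map, sum_map, sum_map]
  rfl

theorem card_compl_filter_lt_succ {n : ℕ} (S : Finset (Fin (n + 1))) (i : Fin n) :
    #(Sᶜ.filter (· < i.succ))
      = #{j : Fin n | j.succ ∉ S ∧ j < i} + if 0 ∈ S then 0 else 1 := by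
  have hS : Sᶜ.filter (· < i.succ) = univ.filter (fun j => j ∉ S ∧ j < i.succ) := by
    ext; simp
  rw [hS, card_filter_univ_succ]
  simp only [succ_lt_succ_iff, succ_pos, and_true]
  split_ifs <;> simp_all

theorem card_compl_map_succEmb_filter_lt_succ {n : ℕ} (T : Finset (Fin n)) (i : Fin n) :
    #((T.map (succEmb n))ᶜ.filter (· < i.succ)) = #(Tᶜ.filter (· < i)) + 1 := by
  rw [card_compl_filter_lt_succ, if_neg (by simp [succ_ne_zero])]
  congr 2; ext; simp

theorem card_compl_insert_zero_map_succEmb_filter_lt_succ {n : ℕ} (T : Finset (Fin n))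
    (i : Fin n) :
    #((insert 0 (T.map (succEmb n)))ᶜ.filter (· < i.succ)) = #(Tᶜ.filter (· < i)) := by
  rw [card_compl_filter_lt_succ, if_pos (mem_insert_self _ _), add_zero]
  congr 1; ext; simp [succ_ne_zero]

end Fin

section

variable {n : ℕ}

def estarTerm (ℓ : ℤ) (S : Finset (Fin n)) : MvPolynomial (Fin n) kk :=
  ∏ i ∈ S, (X i - C (tk ^ ((#(Sᶜ.filter (· < i)) : ℤ) - ℓ)))

theorem estar_eq_sum_estarTerm (m : ℕ) (ℓ : ℤ) :
    estar n m ℓ = ∑ S ∈ powersetCard m univ, estarTerm ℓ S := rfl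

theorem estarTerm_map_succEmb (ℓ : ℤ) (T : Finset (Fin n)) :
    estarTerm ℓ (T.map (Fin.succEmb n)) = rename Fin.succ (estarTerm (ℓ - 1) T) := by
  rw [estarTerm, estarTerm, prod_map, map_prod]
  refine prod_congr rfl fun i _ => ?_
  rw [Fin.coe_succEmb, Fin.card_compl_map_succEmb_filter_lt_succ, map_sub, rename_X, rename_C]
  congr 3
  push_cast; ring

theorem estarTerm_insert_zero_map_succEmb (ℓ : ℤ) (T : Finset (Fin n)) :
    estarTerm ℓ (insert 0 (T.map (Fin.succEmb n)))
      = (X 0 - C (tk ^ (-ℓ))) * C (tk ^ (-(#T : ℤ)))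
          * aeval (fun i : Fin n => (C tk * X i.succ : MvPolynomial (Fin (n + 1)) kk))
              (estarTerm (ℓ - 1) T) := by
  have ht : tk ≠ 0 := RatFunc.X_ne_zero
  have hfactor : ∀ i ∈ T,
      aeval (fun i : Fin n => (C tk * X i.succ : MvPolynomial (Fin (n + 1)) kk))
          (X i - C (tk ^ ((#(Tᶜ.filter (· < i)) : ℤ) - (ℓ - 1))))
        = C tk * (X i.succ - C (tk ^ ((#(Tᶜ.filter (· < i)) : ℤ) - ℓ))) := by
    intro i _
    rw [map_sub, aeval_X, aeval_C, algebraMap_eq, mul_sub, ← map_mul, sub_sub_eq_add_sub,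
      add_sub_right_comm, zpow_add_one₀ ht, mul_comm (tk ^ _) tk]
  rw [estarTerm, estarTerm, prod_insert (by simp [Fin.succ_ne_zero]), map_prod,
    prod_congr rfl hfactor, prod_mul_distrib, prod_const, ← map_pow, prod_map]
  have hzero : #((insert 0 (T.map (Fin.succEmb n)))ᶜ.filter (· < 0)) = 0 := by simp
  have hunit : C (tk ^ (-(#T : ℤ))) * C (tk ^ #T) = (1 : MvPolynomial (Fin (n + 1)) kk) := by
    rw [← map_mul, ← zpow_natCast, ← zpow_add₀ ht, neg_add_cancel, zpow_zero, map_one]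
  rw [mul_assoc _ (C _), ← mul_assoc (C _), hunit, one_mul, hzero, Nat.cast_zero, zero_sub]
  congr 1
  refine prod_congr rfl fun i _ => ?_
  rw [Fin.coe_succEmb, Fin.card_compl_insert_zero_map_succEmb_filter_lt_succ]

theorem estar_succ_succ (e : ℕ) (ℓ : ℤ) :
    estar (n + 1) (e + 1) ℓ
      = (X 0 - C (tk ^ (-ℓ))) * C (tk ^ (-(e : ℤ)))
          * aeval (fun i : Fin n => (C tk * X i.succ : MvPolynomial (Fin (n + 1)) kk))
              (estar n e (ℓ - 1))
        + rename Fin.succ (estar n (e + 1) (ℓ - 1)) := by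
  simp only [estar_eq_sum_estarTerm, Fin.sum_powersetCard_univ_succ, map_sum, mul_sum]
  rw [add_comm (∑ T ∈ powersetCard e univ, _)]
  congr 1
  · exact sum_congr rfl fun T _ => estarTerm_map_succEmb ℓ T
  · refine sum_congr rfl fun T hT => ?_
    rw [estarTerm_insert_zero_map_succEmb, (mem_powersetCard.mp hT).2]

end

-- `e*_d` has `n + 1` variables; the `n`-variable `ẽ*_m` live in the variables `1, …, n` via
-- `Fin.succ`.
theorem estar_variable_splitting_general (n : ℕ) (d : ℕ) (hd1 : 1 ≤ d) :
    estar (n + 1) d (n : ℤ)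
      = (X 0 - C (tk ^ (-(n : ℤ)))) * C (tk ^ (-((d : ℤ) - 1)))
          * (aeval (fun i : Fin n => (C tk * X i.succ : MvPolynomial (Fin (n + 1)) kk)))
              (estar n (d - 1) ((n : ℤ) - 1))
        + rename Fin.succ (estar n d ((n : ℤ) - 1)) := by
  obtain ⟨e, rfl⟩ := Nat.exists_eq_add_of_le' hd1
  rw [estar_succ_succ, Nat.add_sub_cancel, Nat.cast_succ, add_sub_cancel_right]

/-- Variable-splitting recurrence for interpolation elementary polynomials.
The total number of variables is `n + 1`; `e*_d` is the `(n+1)`-variable interpolation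
elementary polynomial (with denominator exponent `n`), and the `n`-variable polynomials
`ẽ*_m` (with denominator exponent `n − 1`) are placed in the variables `x₂, …, xₙ₊₁`
via `Fin.succ`. -/
theorem estar_variable_splitting (n : ℕ) (d : ℕ) (hd1 : 1 ≤ d) (hd2 : d ≤ n + 1) :
    estar (n + 1) d (n : ℤ)
      = (X 0 - C (tk ^ (-(n : ℤ)))) * C (tk ^ (-((d : ℤ) - 1)))
          * (aeval (fun i : Fin n => (C tk * X i.succ : MvPolynomial (Fin (n + 1)) kk)))
              (estar n (d - 1) ((n : ℤ) - 1))
        + rename Fin.succ (estar n d ((n : ℤ) - 1)) :=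
  estar_variable_splitting_general n d hd1
end
end
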